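/- arXiv:2306.16942 — 7 statements merged into one kernel-verified Lean document; each statement's English description precedes it below -/
import Mathlib

section
/- Let M be a topological space, B ⊆ M a subset, and φ : M ≃ M a homeomorphism of M with φ(x) = x for every x ∈ B. Then the quotient of M × [0,1] obtained by gluing two half open books with monodromy φ — namely the quotient of M × [0,1] by the equivalence relation generated by (x,1) ∼ (φ(x),0) for all x ∈ M, (x,t) ∼ (x,t′) for all x ∈ B and t,t′ ∈ [0,1/2], and (x,t) ∼ (x,t′) for all x ∈ B and t,t′ ∈ [1/2,1] — is homeomorphic to the open book Ob(M,B,φ). -/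
/-- Gluing two half open books with monodromy `φ` yields the open book
`Ob(M, B, φ)`. -/
theorem glue_two_half_open_books {M : Type*} [TopologicalSpace M] (B : Set M)
    (φ : M ≃ₜ M) (hφ : ∀ x ∈ B, φ x = x) :
    Nonempty (
      -- the quotient of M × [0,1] gluing two half open books with monodromy φ
      Quot (fun p q : M × Set.Icc (0:ℝ) 1 =>
        (p.2.1 = 1 ∧ q.2.1 = 0 ∧ q.1 = φ p.1) ∨
        (p.1 ∈ B ∧ q.1 = p.1 ∧ p.2.1 ≤ 1/2 ∧ q.2.1 ≤ 1/2) ∨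
        (p.1 ∈ B ∧ q.1 = p.1 ∧ 1/2 ≤ p.2.1 ∧ 1/2 ≤ q.2.1))
      ≃ₜ
      -- the open book Ob(M, B, φ)
      Quot (fun p q : M × Set.Icc (0:ℝ) 1 =>
        (p.2.1 = 1 ∧ q.2.1 = 0 ∧ q.1 = φ p.1) ∨
        (p.1 ∈ B ∧ q.1 = p.1))) := by
  set r1 : M × Set.Icc (0:ℝ) 1 → M × Set.Icc (0:ℝ) 1 → Prop := fun p q =>
        (p.2.1 = 1 ∧ q.2.1 = 0 ∧ q.1 = φ p.1) ∨
        (p.1 ∈ B ∧ q.1 = p.1 ∧ p.2.1 ≤ 1/2 ∧ q.2.1 ≤ 1/2) ∨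
        (p.1 ∈ B ∧ q.1 = p.1 ∧ 1/2 ≤ p.2.1 ∧ 1/2 ≤ q.2.1) with hr1
  set r2 : M × Set.Icc (0:ℝ) 1 → M × Set.Icc (0:ℝ) 1 → Prop := fun p q =>
        (p.2.1 = 1 ∧ q.2.1 = 0 ∧ q.1 = φ p.1) ∨
        (p.1 ∈ B ∧ q.1 = p.1) with hr2
  have hhalf : (1/2 : ℝ) ∈ Set.Icc (0:ℝ) 1 := by norm_num
  -- for x ∈ B, everything collapses to (x, 1/2) in the r1-quotient
  have key : ∀ (x : M) (hx : x ∈ B) (t : Set.Icc (0:ℝ) 1),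
      Quot.mk r1 (x, t) = Quot.mk r1 (x, ⟨1/2, hhalf⟩) := by
    intro x hx t
    rcases le_total t.1 (1/2 : ℝ) with h | h
    · exact Quot.sound (Or.inr (Or.inl ⟨hx, rfl, h, le_refl _⟩))
    · exact Quot.sound (Or.inr (Or.inr ⟨hx, rfl, h, le_refl _⟩))
  have h12 : ∀ p q, r1 p q → Quot.mk r2 p = Quot.mk r2 q := by
    intro p q h
    rcases h with h | ⟨hB, hq, _⟩ | ⟨hB, hq, _⟩
    · exact Quot.sound (Or.inl h)
    · exact Quot.sound (Or.inr ⟨hB, hq⟩)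
    · exact Quot.sound (Or.inr ⟨hB, hq⟩)
  have h21 : ∀ p q, r2 p q → Quot.mk r1 p = Quot.mk r1 q := by
    intro p q h
    rcases h with h | ⟨hB, hq⟩
    · exact Quot.sound (Or.inl h)
    · calc Quot.mk r1 p = Quot.mk r1 (p.1, ⟨1/2, hhalf⟩) := key p.1 hB p.2
        _ = Quot.mk r1 (q.1, ⟨1/2, hhalf⟩) := by rw [hq]
        _ = Quot.mk r1 q := (key q.1 (hq ▸ hB) q.2).symm
  refine ⟨{
    toFun := Quot.lift (Quot.mk r2) h12
    invFun := Quot.lift (Quot.mk r1) h21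
    left_inv := by
      intro a
      induction a using Quot.ind with
      | _ p => rfl
    right_inv := by
      intro a
      induction a using Quot.ind with
      | _ p => rfl
    continuous_toFun := by
      exact continuous_quot_lift _ continuous_quot_mk
    continuous_invFun := by
      exact continuous_quot_lift _ continuous_quot_mk }⟩
end

section
/- The open book with page [0,1] and trivial monodromy is the 2-sphere: the quotient of [0,1] × [0,1] by the equivalence relation generated by (x,1) ∼ (x,0) for all x ∈ [0,1] and (e,t) ∼ (e,t′) for e ∈ {0,1} and all t,t′ ∈ [0,1] is homeomorphic to the unit sphere S² = {x ∈ ℝ³ : ‖x‖ = 1}. -/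
open Real
set_option maxHeartbeats 1000000

namespace OpenBookAux

abbrev I := Set.Icc (0:ℝ) 1

/-- the relation from the statement -/
abbrev r : I × I → I × I → Prop := fun p q =>
  (p.2.1 = 1 ∧ q.2.1 = 0 ∧ q.1 = p.1) ∨
  ((p.1.1 = 0 ∨ p.1.1 = 1) ∧ q.1 = p.1)

/-- coordinates of the spherical parametrization -/
noncomputable def g (p : I × I) : Fin 3 → ℝ :=
  ![Real.sin (π * p.1.1) * Real.cos (2 * π * p.2.1),
    Real.sin (π * p.1.1) * Real.sin (2 * π * p.2.1),
    Real.cos (π * p.1.1)]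

noncomputable def f (p : I × I) : EuclideanSpace ℝ (Fin 3) :=
  (WithLp.equiv 2 (Fin 3 → ℝ)).symm (g p)

lemma f_apply (p : I × I) (i : Fin 3) : f p i = g p i := rfl

lemma norm_f (p : I × I) : ‖f p‖ = 1 := by
  rw [EuclideanSpace.norm_eq]
  have h1 := Real.sin_sq_add_cos_sq (π * p.1.1)
  have h2 := Real.sin_sq_add_cos_sq (2 * π * p.2.1)
  rw [show (1:ℝ) = Real.sqrt 1 by simp]
  congr 1
  simp [Fin.sum_univ_three, f_apply, g, Real.norm_eq_abs, sq_abs]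
  nlinarith [h1, h2]

lemma f_mem (p : I × I) : f p ∈ Metric.sphere (0 : EuclideanSpace ℝ (Fin 3)) 1 := by
  simp [mem_sphere_iff_norm, norm_f]

lemma continuous_f : Continuous f := by
  apply (PiLp.continuousLinearEquiv 2 ℝ (fun _ : Fin 3 => ℝ)).symm.continuous.comp
  apply continuous_pi
  intro i
  fin_cases i
  · show Continuous fun p : I × I => Real.sin (π * p.1.1) * Real.cos (2 * π * p.2.1)
    fun_prop
  · show Continuous fun p : I × I => Real.sin (π * p.1.1) * Real.sin (2 * π * p.2.1)
    fun_prop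
  · show Continuous fun p : I × I => Real.cos (π * p.1.1)
    fun_prop

lemma f_resp : ∀ p q, r p q → f p = f q := by
  intro p q h
  unfold f g
  rcases h with ⟨h1, h2, h3⟩ | ⟨h1, h2⟩
  · rw [h1, h2, h3]
    norm_num [Real.cos_two_pi, Real.sin_two_pi]
  · rw [h2]
    have hs : Real.sin (π * p.1.1) = 0 := by
      rcases h1 with h | h <;> rw [h] <;> simp
    rw [hs]
    norm_num

lemma sum_sq (v : EuclideanSpace ℝ (Fin 3)) (hv : ‖v‖ = 1) :
    v 0 ^ 2 + v 1 ^ 2 + v 2 ^ 2 = 1 := by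
  have := EuclideanSpace.norm_eq v
  rw [hv] at this
  have h := congrArg (· ^ 2) this.symm
  simp only [Fin.sum_univ_three, Real.norm_eq_abs, sq_abs] at h
  rw [Real.sq_sqrt (by positivity)] at h
  linarith [h]

noncomputable def F : Quot r → Metric.sphere (0 : EuclideanSpace ℝ (Fin 3)) 1 :=
  Quot.lift (fun p => ⟨f p, f_mem p⟩) (fun p q h => Subtype.ext (f_resp p q h))

lemma continuous_F : Continuous F :=
  continuous_quot_lift _ (Continuous.subtype_mk continuous_f _)

lemma F_surj : Function.Surjective F := by
  rintro ⟨v, hv⟩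
  rw [mem_sphere_iff_norm, sub_zero] at hv
  have hsum := sum_sq v hv
  set z := v 2 with hzdef
  have hz1 : -1 ≤ z := by nlinarith
  have hz2 : z ≤ 1 := by nlinarith
  have hx01 : Real.arccos z / π ∈ I := by
    constructor
    · exact div_nonneg (Real.arccos_nonneg z) Real.pi_pos.le
    · rw [div_le_one Real.pi_pos]
      exact Real.arccos_le_pi z
  set x : I := ⟨Real.arccos z / π, hx01⟩ with hxdef
  have hπx : π * x.1 = Real.arccos z := by
    show π * (Real.arccos z / π) = Real.arccos z
    field_simp
  have hcos : Real.cos (π * x.1) = z := by rw [hπx]; exact Real.cos_arccos hz1 hz2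
  have hsin : Real.sin (π * x.1) = Real.sqrt (1 - z ^ 2) := by
    rw [hπx]; exact Real.sin_arccos z
  have h1z : 1 - z ^ 2 = v 0 ^ 2 + v 1 ^ 2 := by linarith
  by_cases hs : v 0 ^ 2 + v 1 ^ 2 = 0
  · -- poles
    have h0 : v 0 = 0 := by nlinarith
    have h1 : v 1 = 0 := by nlinarith
    refine ⟨Quot.mk r (x, ⟨0, by norm_num⟩), ?_⟩
    apply Subtype.ext
    show f _ = v
    ext i
    fin_cases i <;>
      simp [f_apply, g, hcos, hsin, h1z, hs, h0, h1, ← hzdef]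
  · have hspos : (0:ℝ) < v 0 ^ 2 + v 1 ^ 2 := lt_of_le_of_ne (by positivity) (Ne.symm hs)
    set sr : ℝ := Real.sqrt (v 0 ^ 2 + v 1 ^ 2) with hsr
    have hsrpos : 0 < sr := Real.sqrt_pos.mpr hspos
    have hsrsq : sr ^ 2 = v 0 ^ 2 + v 1 ^ 2 := Real.sq_sqrt hspos.le
    set a : ℝ := v 0 / sr with ha
    set b : ℝ := v 1 / sr with hb
    have hab : a ^ 2 + b ^ 2 = 1 := by
      rw [ha, hb, div_pow, div_pow, ← add_div, hsrsq]
      exact div_self hspos.ne'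
    have ha1 : -1 ≤ a := by nlinarith
    have ha2 : a ≤ 1 := by nlinarith
    have hsqab : Real.sqrt (1 - a ^ 2) = |b| := by
      rw [show 1 - a ^ 2 = b ^ 2 by linarith]
      exact Real.sqrt_sq_eq_abs b
    obtain ⟨θ, hθ0, hθ2π, hcosθ, hsinθ⟩ :
        ∃ θ : ℝ, 0 ≤ θ ∧ θ ≤ 2 * π ∧ Real.cos θ = a ∧ Real.sin θ = b := by
      by_cases hbb : 0 ≤ b
      · refine ⟨Real.arccos a, Real.arccos_nonneg a, ?_, Real.cos_arccos ha1 ha2, ?_⟩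
        · nlinarith [Real.arccos_le_pi a, Real.pi_pos]
        · rw [Real.sin_arccos, hsqab, abs_of_nonneg hbb]
      · refine ⟨2 * π - Real.arccos a, ?_, ?_, ?_, ?_⟩
        · nlinarith [Real.arccos_le_pi a, Real.pi_pos]
        · nlinarith [Real.arccos_nonneg a]
        · rw [Real.cos_two_pi_sub]; exact Real.cos_arccos ha1 ha2
        · rw [Real.sin_two_pi_sub, Real.sin_arccos, hsqab,
            abs_of_neg (lt_of_not_ge hbb)]; ring
    have ht01 : θ / (2 * π) ∈ I := by
      constructor
      · positivity
      · rw [div_le_one (by positivity)]; exact hθ2π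
    set t : I := ⟨θ / (2 * π), ht01⟩ with htdef
    have h2πt : 2 * π * t.1 = θ := by
      show 2 * π * (θ / (2 * π)) = θ
      field_simp
    refine ⟨Quot.mk r (x, t), ?_⟩
    apply Subtype.ext
    show f _ = v
    have hsinx : Real.sin (π * x.1) = sr := by
      rw [hsin, h1z]
    ext i
    fin_cases i <;>
      simp only [f_apply, g, Matrix.cons_val_zero, Matrix.cons_val_one, Matrix.head_cons,
        Matrix.cons_val_two, Matrix.tail_cons, h2πt, hcosθ, hsinθ, hsinx, hcos]
    · show sr * a = v 0
      rw [ha]; field_simp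
    · show sr * b = v 1
      rw [hb]; field_simp
    · rfl

lemma F_inj : Function.Injective F := by
  rintro p' q' hpq
  induction p' using Quot.ind with | _ p => ?_
  induction q' using Quot.ind with | _ q => ?_
  obtain ⟨x, t⟩ := p
  obtain ⟨y, s⟩ := q
  have h : f (x, t) = f (y, s) := congrArg Subtype.val hpq
  have h0 : g (x, t) 0 = g (y, s) 0 := congrFun (congrArg (WithLp.equiv 2 (Fin 3 → ℝ)) h) 0
  have h1 : g (x, t) 1 = g (y, s) 1 := congrFun (congrArg (WithLp.equiv 2 (Fin 3 → ℝ)) h) 1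
  have h2 : g (x, t) 2 = g (y, s) 2 := congrFun (congrArg (WithLp.equiv 2 (Fin 3 → ℝ)) h) 2
  simp only [g, Matrix.cons_val_zero, Matrix.cons_val_one, Matrix.head_cons, Matrix.cons_val_two,
    Matrix.tail_cons] at h0 h1 h2
  -- third coordinate gives x = y
  have hxy : x = y := by
    apply Subtype.ext
    have hmem1 : π * x.1 ∈ Set.Icc 0 π := by
      constructor
      · exact mul_nonneg Real.pi_pos.le x.2.1
      · nlinarith [x.2.2, Real.pi_pos]
    have hmem2 : π * y.1 ∈ Set.Icc 0 π := by
      constructor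
      · exact mul_nonneg Real.pi_pos.le y.2.1
      · nlinarith [y.2.2, Real.pi_pos]
    have := Real.injOn_cos hmem1 hmem2 h2
    have hπ := Real.pi_ne_zero
    field_simp at this
    tauto
  subst hxy
  by_cases hbd : x.1 = 0 ∨ x.1 = 1
  · -- boundary: the two points are directly related
    exact Quot.sound (Or.inr ⟨hbd, rfl⟩)
  · push_neg at hbd
    have hx0 : 0 < x.1 := lt_of_le_of_ne x.2.1 (Ne.symm hbd.1)
    have hx1 : x.1 < 1 := lt_of_le_of_ne x.2.2 hbd.2
    have hsinpos : 0 < Real.sin (π * x.1) := by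
      apply Real.sin_pos_of_pos_of_lt_pi
      · positivity
      · nlinarith [Real.pi_pos]
    have hc : Real.cos (2 * π * t.1) = Real.cos (2 * π * s.1) := by
      have := mul_left_cancel₀ hsinpos.ne' h0; exact this
    have hsn : Real.sin (2 * π * t.1) = Real.sin (2 * π * s.1) := by
      have := mul_left_cancel₀ hsinpos.ne' h1; exact this
    have hcos1 : Real.cos (2 * π * t.1 - 2 * π * s.1) = 1 := by
      rw [Real.cos_sub, hc, hsn]
      exact Real.sin_sq_add_cos_sq (2 * π * s.1) ▸ by
        nlinarith [Real.sin_sq_add_cos_sq (2 * π * s.1)]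
    obtain ⟨n, hn⟩ := (Real.cos_eq_one_iff _).mp hcos1
    have hπ := Real.pi_pos
    have hts : (n : ℝ) = t.1 - s.1 := by
      have : (n:ℝ) * (2 * π) = (t.1 - s.1) * (2 * π) := by rw [hn]; ring
      exact mul_right_cancel₀ (by positivity) this
    have hnb : -1 ≤ (n:ℝ) ∧ (n:ℝ) ≤ 1 := by
      constructor <;> rw [hts] <;>
        [linarith [t.2.1, s.2.2]; linarith [t.2.2, s.2.1]]
    have hn1 : (-1 : ℤ) ≤ n := by exact_mod_cast hnb.1
    have hn2 : n ≤ (1 : ℤ) := by exact_mod_cast hnb.2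
    interval_cases n
    · -- n = -1 : t = 0, s = 1
      have ht0 : t.1 = 0 := by push_cast at hts; linarith [t.2.1, s.2.2]
      have hs1 : s.1 = 1 := by push_cast at hts; linarith [t.2.1, s.2.2]
      exact (Quot.sound (show r (x, s) (x, t) from Or.inl ⟨hs1, ht0, rfl⟩)).symm
    · -- n = 0 : t = s
      have : t = s := Subtype.ext (by push_cast at hts; linarith)
      rw [this]
    · -- n = 1 : t = 1, s = 0
      have ht1 : t.1 = 1 := by push_cast at hts; linarith [t.2.2, s.2.1]
      have hs0 : s.1 = 0 := by push_cast at hts; linarith [t.2.2, s.2.1]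
      exact Quot.sound (Or.inl ⟨ht1, hs0, rfl⟩)

end OpenBookAux

/-- The open book with page `[0,1]` and trivial monodromy is the 2-sphere. -/
theorem open_book_of_interval_id :
    Nonempty (
      -- the open book Ob([0,1], {0,1}, id)
      Quot (fun p q : Set.Icc (0:ℝ) 1 × Set.Icc (0:ℝ) 1 =>
        (p.2.1 = 1 ∧ q.2.1 = 0 ∧ q.1 = p.1) ∨
        ((p.1.1 = 0 ∨ p.1.1 = 1) ∧ q.1 = p.1))
      ≃ₜ
      -- the unit sphere S² in ℝ³
      Metric.sphere (0 : EuclideanSpace ℝ (Fin 3)) 1) := by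
  refine ⟨@Continuous.homeoOfEquivCompactToT2 _ _ _ _ ?_ _
    (Equiv.ofBijective OpenBookAux.F ⟨OpenBookAux.F_inj, OpenBookAux.F_surj⟩)
    OpenBookAux.continuous_F⟩
  exact Quot.compactSpace
end

section
/- For every m ≥ 1, the quotient of Dᵐ × [0,1/2] by the equivalence relation generated by (y,t) ∼ (y,t′) for all y ∈ ∂Dᵐ (i.e. ‖y‖ = 1) and all t,t′ ∈ [0,1/2] is homeomorphic to the closed unit ball D^{m+1} in ℝ^{m+1}, where Dᵐ is the closed unit ball in ℝᵐ. -/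
set_option maxHeartbeats 1000000

noncomputable def snocE {m : ℕ} (x : EuclideanSpace ℝ (Fin m)) (s : ℝ) :
    EuclideanSpace ℝ (Fin (m + 1)) :=
  (EuclideanSpace.equiv (Fin (m+1)) ℝ).symm (Fin.snoc x s)

lemma snocE_castSucc {m : ℕ} (x : EuclideanSpace ℝ (Fin m)) (s : ℝ) (i : Fin m) :
    snocE x s (Fin.castSucc i) = x i := by simp [snocE]

lemma snocE_last {m : ℕ} (x : EuclideanSpace ℝ (Fin m)) (s : ℝ) :
    snocE x s (Fin.last m) = s := by simp [snocE]

lemma snocE_norm_sq {m : ℕ} (x : EuclideanSpace ℝ (Fin m)) (s : ℝ) :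
    ‖snocE x s‖ ^ 2 = ‖x‖ ^ 2 + s ^ 2 := by
  have h1 : ‖snocE x s‖ = Real.sqrt (∑ i, ‖snocE x s i‖ ^ 2) := EuclideanSpace.norm_eq _
  have h2 : ‖x‖ = Real.sqrt (∑ i, ‖x i‖ ^ 2) := EuclideanSpace.norm_eq _
  rw [h1, h2, Real.sq_sqrt (by positivity), Real.sq_sqrt (by positivity),
    Fin.sum_univ_castSucc]
  simp [snocE_castSucc, snocE_last, sq_abs]

lemma snocE_inj {m : ℕ} {x x' : EuclideanSpace ℝ (Fin m)} {s s' : ℝ}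
    (h : snocE x s = snocE x' s') : x = x' ∧ s = s' := by
  constructor
  · ext i
    have := congrFun (congrArg (EuclideanSpace.equiv (Fin (m+1)) ℝ) h) (Fin.castSucc i)
    simpa [snocE] using this
  · have := congrFun (congrArg (EuclideanSpace.equiv (Fin (m+1)) ℝ) h) (Fin.last m)
    simpa [snocE] using this

/-- For `m ≥ 1`, the quotient of `Dᵐ × [0,1/2]` collapsing each boundary
fiber `{y} × [0,1/2]`, `‖y‖ = 1`, to a point is homeomorphic to `D^{m+1}`. -/
theorem collapsed_ball_cylinder (m : ℕ) (hm : 1 ≤ m) :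
    Nonempty (
      Quot (fun p q : Metric.closedBall (0 : EuclideanSpace ℝ (Fin m)) 1 ×
          Set.Icc (0:ℝ) (1/2) =>
        ‖(p.1 : EuclideanSpace ℝ (Fin m))‖ = 1 ∧ q.1 = p.1)
      ≃ₜ
      Metric.closedBall (0 : EuclideanSpace ℝ (Fin (m + 1))) 1) := by
  set R := (fun p q : Metric.closedBall (0 : EuclideanSpace ℝ (Fin m)) 1 ×
          Set.Icc (0:ℝ) (1/2) =>
        ‖(p.1 : EuclideanSpace ℝ (Fin m))‖ = 1 ∧ q.1 = p.1) with hR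
  -- the map downstairs
  set f : Metric.closedBall (0 : EuclideanSpace ℝ (Fin m)) 1 × Set.Icc (0:ℝ) (1/2) →
      EuclideanSpace ℝ (Fin (m+1)) :=
    fun p => snocE (p.1 : EuclideanSpace ℝ (Fin m))
      ((4 * (p.2 : ℝ) - 1) * Real.sqrt (1 - ‖(p.1 : EuclideanSpace ℝ (Fin m))‖ ^ 2)) with hf
  have hnorm : ∀ p, ‖f p‖ ≤ 1 := by
    intro p
    obtain ⟨⟨x, hx⟩, ⟨t, ht0, ht1⟩⟩ := p
    simp only [hf]
    have hx1 : ‖x‖ ≤ 1 := by simpa using hx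
    have hxs : ‖x‖ ^ 2 ≤ 1 := by nlinarith [norm_nonneg x]
    have habs : |4 * t - 1| ≤ 1 := by rw [abs_le]; constructor <;> linarith
    have hsq : ‖f (⟨x, hx⟩, ⟨t, ht0, ht1⟩)‖ ^ 2 ≤ 1 := by
      rw [hf]; rw [snocE_norm_sq, mul_pow, Real.sq_sqrt (by linarith)]
      have h4 : (4 * t - 1) ^ 2 ≤ 1 := by nlinarith [sq_abs (4 * t - 1)]
      nlinarith
    nlinarith [norm_nonneg (f (⟨x, hx⟩, ⟨t, ht0, ht1⟩))]
  set F : Metric.closedBall (0 : EuclideanSpace ℝ (Fin m)) 1 × Set.Icc (0:ℝ) (1/2) →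
      Metric.closedBall (0 : EuclideanSpace ℝ (Fin (m+1))) 1 :=
    fun p => ⟨f p, by simpa using hnorm p⟩ with hF
  have hresp : ∀ p q, R p q → F p = F q := by
    rintro p q ⟨h1, h2⟩
    apply Subtype.ext
    simp only [hF, hf, h2, h1]
    norm_num
  have hfc : Continuous f := by
    apply Continuous.comp (EuclideanSpace.equiv (Fin (m+1)) ℝ).symm.continuous
    apply continuous_pi
    intro i
    refine Fin.lastCases ?_ ?_ i
    · have : (fun p : Metric.closedBall (0 : EuclideanSpace ℝ (Fin m)) 1 ×
          Set.Icc (0:ℝ) (1/2) =>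
          Fin.snoc (α := fun _ => ℝ) (p.1 : EuclideanSpace ℝ (Fin m))
            ((4 * (p.2 : ℝ) - 1) * Real.sqrt (1 - ‖(p.1 : EuclideanSpace ℝ (Fin m))‖ ^ 2))
            (Fin.last m)) =
        fun p => (4 * (p.2 : ℝ) - 1) * Real.sqrt (1 - ‖(p.1 : EuclideanSpace ℝ (Fin m))‖ ^ 2) := by
        funext p; simp
      rw [this]
      fun_prop
    · intro j
      have : (fun p : Metric.closedBall (0 : EuclideanSpace ℝ (Fin m)) 1 ×
          Set.Icc (0:ℝ) (1/2) =>
          Fin.snoc (α := fun _ => ℝ) (p.1 : EuclideanSpace ℝ (Fin m))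
            ((4 * (p.2 : ℝ) - 1) * Real.sqrt (1 - ‖(p.1 : EuclideanSpace ℝ (Fin m))‖ ^ 2))
            (Fin.castSucc j)) =
        fun p => EuclideanSpace.proj j (p.1 : EuclideanSpace ℝ (Fin m)) := by
        funext p; simp
      rw [this]
      exact (EuclideanSpace.proj j).continuous.comp (continuous_subtype_val.comp continuous_fst)
  have hFc : Continuous F := hfc.subtype_mk _
  set G : Quot R → Metric.closedBall (0 : EuclideanSpace ℝ (Fin (m+1))) 1 :=
    Quot.lift F hresp with hG
  have hGc : Continuous G := continuous_quot_lift _ hFc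
  have hGinj : Function.Injective G := by
    rintro ⟨p⟩ ⟨q⟩ h
    have hFpq : F p = F q := h
    have hfpq : f p = f q := congrArg Subtype.val hFpq
    obtain ⟨hx, hs⟩ := snocE_inj hfpq
    obtain ⟨⟨x, hxm⟩, ⟨t, ht0, ht1⟩⟩ := p
    obtain ⟨⟨x', hxm'⟩, ⟨t', ht0', ht1'⟩⟩ := q
    simp only at hx hs
    subst hx
    by_cases h1 : ‖x‖ = 1
    · exact Quot.sound ⟨h1, rfl⟩
    · have hxlt : ‖x‖ < 1 := lt_of_le_of_ne (by simpa using hxm) h1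
      have hpos : 0 < Real.sqrt (1 - ‖x‖ ^ 2) := by
        apply Real.sqrt_pos.mpr; nlinarith [norm_nonneg x]
      have : t = t' := by
        have := mul_right_cancel₀ (ne_of_gt hpos) hs
        linarith
      subst this
      rfl

  have hGsurj : Function.Surjective G := by
    rintro ⟨z, hz⟩
    have hz1 : ‖z‖ ≤ 1 := by simpa using hz
    set x : EuclideanSpace ℝ (Fin m) := WithLp.toLp 2 (fun i => z (Fin.castSucc i)) with hxdef
    set s : ℝ := z (Fin.last m) with hsdef
    have hzsnoc : z = snocE x s := by
      ext i
      refine Fin.lastCases ?_ ?_ i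
      · rw [snocE_last]
      · intro j; rw [snocE_castSucc]
    have hsum : ‖x‖ ^ 2 + s ^ 2 = ‖z‖ ^ 2 := by rw [hzsnoc, snocE_norm_sq]
    have hzsq : ‖z‖ ^ 2 ≤ 1 := by nlinarith [norm_nonneg z]
    have hxsq : ‖x‖ ^ 2 ≤ 1 := by nlinarith [sq_nonneg s]
    have hxle : ‖x‖ ≤ 1 := by nlinarith [norm_nonneg x]
    have hxmem : x ∈ Metric.closedBall (0 : EuclideanSpace ℝ (Fin m)) 1 := by
      simpa using hxle
    by_cases h1 : ‖x‖ = 1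
    · have hs0 : s = 0 := by nlinarith [sq_nonneg s]
      refine ⟨Quot.mk R (⟨x, hxmem⟩, ⟨0, by norm_num, by norm_num⟩), ?_⟩
      have : F (⟨x, hxmem⟩, ⟨0, by norm_num, by norm_num⟩) = ⟨z, hz⟩ := by
        apply Subtype.ext
        simp only [hF, hf, h1]
        rw [hzsnoc, hs0]
        norm_num
      exact this
    · have hxlt : ‖x‖ < 1 := lt_of_le_of_ne hxle h1
      set c : ℝ := Real.sqrt (1 - ‖x‖ ^ 2) with hc
      have hcpos : 0 < c := by apply Real.sqrt_pos.mpr; nlinarith [norm_nonneg x]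
      have hcsq : c ^ 2 = 1 - ‖x‖ ^ 2 := Real.sq_sqrt (by nlinarith [norm_nonneg x])
      have hsc : s ^ 2 ≤ c ^ 2 := by nlinarith
      have hsabs : |s| ≤ c := by
        have h := Real.sqrt_le_sqrt hsc
        rwa [Real.sqrt_sq_eq_abs, Real.sqrt_sq hcpos.le] at h
      have hsl : -c ≤ s := (abs_le.mp hsabs).1
      have hsu : s ≤ c := (abs_le.mp hsabs).2
      set t : ℝ := (s / c + 1) / 4 with htdef
      have ht0 : 0 ≤ t := by
        have : -1 ≤ s / c := by
          rw [le_div_iff₀ hcpos]; linarith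
        rw [htdef]; linarith
      have ht1 : t ≤ 1 / 2 := by
        have : s / c ≤ 1 := by
          rw [div_le_one hcpos]; exact hsu
        rw [htdef]; linarith
      refine ⟨Quot.mk R (⟨x, hxmem⟩, ⟨t, ht0, ht1⟩), ?_⟩
      have key : (4 * t - 1) * c = s := by
        rw [htdef]; field_simp; ring
      have : F (⟨x, hxmem⟩, ⟨t, ht0, ht1⟩) = ⟨z, hz⟩ := by
        apply Subtype.ext
        simp only [hF, hf]
        rw [hzsnoc, ← hc, key]
      exact this
  haveI : CompactSpace (Metric.closedBall (0 : EuclideanSpace ℝ (Fin m)) 1) :=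
    isCompact_iff_compactSpace.mp (isCompact_closedBall _ _)
  exact ⟨Continuous.homeoOfEquivCompactToT2
    (f := Equiv.ofBijective G ⟨hGinj, hGsurj⟩) hGc⟩
end

section
/- The open book with page the annulus and monodromy the composition of three Dehn twists along the core is the lens space L(3,1): let ψ : S¹ × [0,1] → S¹ × [0,1] be the homeomorphism ψ(z,r) = (e^{6πir}·z, r) (which fixes the boundary S¹ × {0,1} pointwise). Then the quotient of (S¹ × [0,1]) × [0,1] by the equivalence relation generated by ((z,r),1) ∼ (ψ(z,r),0) for all (z,r) and ((z,e),t) ∼ ((z,e),t′) for all z ∈ S¹, e ∈ {0,1}, t,t′ ∈ [0,1] is homeomorphic to the lens space L(3,1), the quotient of the unit sphere S³ = {(z₁,z₂) ∈ ℂ² : |z₁|² + |z₂|² = 1} by the equivalence relation (z₁,z₂) ∼ (e^{2πi/3}z₁, e^{2πi/3}z₂). -/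
open Complex Real

noncomputable section
namespace OB7

abbrev E2 := EuclideanSpace ℂ (Fin 2)
abbrev S3 := Metric.sphere (0 : E2) 1

def ω : ℂ := Complex.exp (2 * Real.pi * Complex.I / 3)

lemma omega_abs : ‖ω‖ = 1 := by simp [ω, Complex.norm_exp]

lemma omega_ne_zero : ω ≠ 0 := Complex.exp_ne_zero _

lemma omega_cube : ω ^ 3 = 1 := by
  rw [ω, ← Complex.exp_nat_mul,
    show ((3:ℕ):ℂ) * (2 * Real.pi * Complex.I / 3) = 2 * Real.pi * Complex.I by push_cast; ring]
  exact Complex.exp_two_pi_mul_I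

lemma two_pi_I_ne_zero : (2 * (Real.pi:ℂ) * Complex.I) ≠ 0 := by
  simp [Real.pi_ne_zero, Complex.I_ne_zero]

lemma omega_ne_one : ω ≠ 1 := by
  intro h
  rw [ω, Complex.exp_eq_one_iff] at h
  obtain ⟨n, hn⟩ := h
  have h0 : ((1:ℂ) - 3 * n) * (2 * Real.pi * Complex.I) = 0 := by
    linear_combination 3 * hn
  rcases mul_eq_zero.mp h0 with h' | h'
  · have : (3:ℤ) * n = 1 := by
      have : (3:ℂ) * n = 1 := by linear_combination -h'
      exact_mod_cast this
    omega
  · exact two_pi_I_ne_zero h'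

lemma omega_sum : 1 + ω + ω ^ 2 = 0 := by
  have h := omega_cube
  have hne : ω - 1 ≠ 0 := sub_ne_zero.mpr omega_ne_one
  have : (ω - 1) * (1 + ω + ω ^ 2) = 0 := by linear_combination h
  rcases mul_eq_zero.mp this with h' | h'
  · exact absurd h' hne
  · exact h'

lemma cube_roots {x y : ℂ} (h : y ^ 3 = x ^ 3) : ∃ s : ℕ, y = ω ^ s * x := by
  have key : (y - x) * (y - ω * x) * (y - ω ^ 2 * x) = 0 := by
    linear_combination h + (x^2*y - x*y^2) * omega_sum + (x^2*y - x^3) * omega_cube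
  rcases mul_eq_zero.mp key with h' | h'
  · rcases mul_eq_zero.mp h' with h'' | h''
    · exact ⟨0, by rw [pow_zero, one_mul]; linear_combination h''⟩
    · exact ⟨1, by rw [pow_one]; linear_combination h''⟩
  · exact ⟨2, by linear_combination h'⟩

def A1 (φ r t : ℝ) : ℂ :=
  (Real.cos (π * r / 2) : ℂ) * Complex.exp (((φ / 3 + 2 * π * r * t : ℝ) : ℂ) * Complex.I)

def A2 (φ r t : ℝ) : ℂ :=
  (Real.sin (π * r / 2) : ℂ) * Complex.exp (((φ / 3 + 2 * π * (r - 1) * t : ℝ) : ℂ) * Complex.I)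

def F0 (φ r t : ℝ) : E2 :=
  (WithLp.equiv 2 (Fin 2 → ℂ)).symm (fun i => if i = 0 then A1 φ r t else A2 φ r t)

@[simp] lemma F0_apply0 (φ r t : ℝ) : F0 φ r t 0 = A1 φ r t := rfl
@[simp] lemma F0_apply1 (φ r t : ℝ) : F0 φ r t 1 = A2 φ r t := rfl

lemma abs_A1 (φ r t : ℝ) : ‖A1 φ r t‖ = |Real.cos (π * r / 2)| := by
  rw [A1, norm_mul, Complex.norm_exp_ofReal_mul_I, mul_one, Complex.norm_real, Real.norm_eq_abs]

lemma abs_A2 (φ r t : ℝ) : ‖A2 φ r t‖ = |Real.sin (π * r / 2)| := by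
  rw [A2, norm_mul, Complex.norm_exp_ofReal_mul_I, mul_one, Complex.norm_real, Real.norm_eq_abs]

lemma F0_mem (φ r t : ℝ) : F0 φ r t ∈ S3 := by
  rw [mem_sphere_zero_iff_norm, EuclideanSpace.norm_eq, Fin.sum_univ_two]
  simp only [F0_apply0, F0_apply1, abs_A1, abs_A2]
  rw [_root_.sq_abs, _root_.sq_abs]
  rw [show Real.cos (π * r / 2) ^ 2 + Real.sin (π * r / 2) ^ 2 = 1 by
    rw [add_comm]; exact Real.sin_sq_add_cos_sq _]
  exact Real.sqrt_one

def Fs (φ r t : ℝ) : S3 := ⟨F0 φ r t, F0_mem φ r t⟩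

lemma Fs_cont : Continuous (fun p : ℝ × ℝ × ℝ => Fs p.1 p.2.1 p.2.2) := by
  apply Continuous.subtype_mk
  unfold F0
  apply (PiLp.continuous_toLp 2 (fun _ : Fin 2 => ℂ)).comp
  apply continuous_pi
  intro i
  by_cases h : i = 0 <;> simp only [h, if_pos, if_true, if_neg, if_false, A1, A2] <;> fun_prop

/-! ### exponential helper lemmas -/

lemma exp_I_periodic (θ : ℝ) (n : ℤ) :
    Complex.exp (((θ + 2 * π * n : ℝ) : ℂ) * Complex.I) = Complex.exp ((θ:ℂ) * Complex.I) := by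
  push_cast
  rw [add_mul, Complex.exp_add]
  rw [show ((2:ℂ) * π * n) * Complex.I = n * (2 * π * Complex.I) by ring]
  rw [Complex.exp_int_mul_two_pi_mul_I, mul_one]

lemma exp_I_inj {a b : ℝ} :
    Complex.exp ((a:ℂ) * Complex.I) = Complex.exp ((b:ℂ) * Complex.I) ↔
      ∃ n : ℤ, a = b + 2 * π * n := by
  rw [Complex.exp_eq_exp_iff_exists_int]
  constructor
  · rintro ⟨n, hn⟩
    refine ⟨n, ?_⟩
    have h' : ((a:ℂ)) = b + 2 * π * n := by
      have hI := Complex.I_ne_zero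
      apply mul_right_cancel₀ hI
      linear_combination hn
    exact_mod_cast h'
  · rintro ⟨n, hn⟩
    refine ⟨n, ?_⟩
    rw [show ((a:ℂ)) = ((b:ℝ) + 2 * π * n : ℝ) by exact_mod_cast hn]
    push_cast
    ring

lemma omega_zpow (k : ℤ) : ω ^ k = Complex.exp (((2 * π * k / 3 : ℝ) : ℂ) * Complex.I) := by
  rw [ω, ← Complex.exp_int_mul]
  congr 1
  push_cast
  ring

/-! ### F0 structure lemmas -/

lemma smul_apply2 (c : ℂ) (x : E2) (i : Fin 2) : (c • x) i = c * x i := rfl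

lemma omega_zpow_mul_exp (k : ℤ) (θ : ℝ) :
    ω ^ k * Complex.exp ((θ:ℂ) * Complex.I) =
      Complex.exp (((θ + 2 * π * k / 3 : ℝ) : ℂ) * Complex.I) := by
  rw [omega_zpow, ← Complex.exp_add]
  congr 1
  push_cast
  ring

lemma F0_shift (φ r t : ℝ) (n : ℤ) :
    F0 (φ + 2 * π * n) r t = (ω ^ n) • F0 φ r t := by
  refine PiLp.ext fun i => ?_
  rw [smul_apply2]
  by_cases h : i = 0
  · subst h
    rw [F0_apply0, F0_apply0, A1, A1]
    conv_rhs => rw [mul_left_comm]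
    rw [omega_zpow_mul_exp]
    congr 2
    push_cast; ring
  · have h1 : i = 1 := by omega
    subst h1
    rw [F0_apply1, F0_apply1, A2, A2]
    conv_rhs => rw [mul_left_comm]
    rw [omega_zpow_mul_exp]
    congr 2
    push_cast; ring

lemma F0_mono (φ r : ℝ) : F0 φ r 1 = F0 (φ + 6 * π * r) r 0 := by
  refine PiLp.ext fun i => ?_
  by_cases h : i = 0
  · subst h
    rw [F0_apply0, F0_apply0, A1, A1]
    congr 2
    push_cast; ring
  · have h1 : i = 1 := by omega
    subst h1
    rw [F0_apply1, F0_apply1, A2, A2]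
    congr 1
    rw [show (φ / 3 + 2 * π * (r - 1) * 1 : ℝ) = ((φ + 6*π*r)/3 + 2*π*(r-1)*0) + 2*π*(-1 : ℤ) by push_cast; ring]
    rw [exp_I_periodic]

lemma F0_bdry0 (φ t t' : ℝ) : F0 φ 0 t = F0 φ 0 t' := by
  refine PiLp.ext fun i => ?_
  by_cases h : i = 0
  · subst h
    rw [F0_apply0, F0_apply0, A1, A1]
    congr 2
    ring
  · have h1 : i = 1 := by omega
    subst h1
    rw [F0_apply1, F0_apply1, A2, A2]
    rw [show π * 0 / 2 = 0 by ring, Real.sin_zero]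
    push_cast
    ring

lemma F0_bdry1 (φ t t' : ℝ) : F0 φ 1 t = F0 φ 1 t' := by
  refine PiLp.ext fun i => ?_
  by_cases h : i = 0
  · subst h
    rw [F0_apply0, F0_apply0, A1, A1]
    rw [show π * 1 / 2 = π / 2 by ring, Real.cos_pi_div_two]
    push_cast
    ring
  · have h1 : i = 1 := by omega
    subst h1
    rw [F0_apply1, F0_apply1, A2, A2]
    congr 2
    ring

/-! ### the lens space relation -/

def RL : S3 → S3 → Prop := fun p q =>
  (q : E2) = Complex.exp (2 * Real.pi * Complex.I / 3) • (p : E2)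

lemma RL_def (p q : S3) : RL p q ↔ (q : E2) = ω • (p : E2) := Iff.rfl

lemma smul_mem_S3 (c : ℂ) (hc : ‖c‖ = 1) (x : S3) :
    c • (x : E2) ∈ S3 := by
  rw [mem_sphere_zero_iff_norm, norm_smul]
  have hx : ‖(x : E2)‖ = 1 := mem_sphere_zero_iff_norm.mp x.2
  rw [hx, mul_one]
  exact hc

lemma abs_omega_pow (s : ℕ) : ‖ω ^ s‖ = 1 := by
  rw [norm_pow, omega_abs, one_pow]

lemma abs_omega_zpow (k : ℤ) : ‖ω ^ k‖ = 1 := by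
  rw [norm_zpow, omega_abs, one_zpow]

lemma mk_smul_pow : ∀ (s : ℕ) (x y : S3), (y : E2) = ω ^ s • (x : E2) →
    Quot.mk RL y = Quot.mk RL x := by
  intro s
  induction s with
  | zero =>
    intro x y h
    have : y = x := Subtype.ext (by rw [h, pow_zero, one_smul])
    rw [this]
  | succ n ih =>
    intro x y h
    have hmem : ω ^ n • (x : E2) ∈ S3 := smul_mem_S3 _ (abs_omega_pow n) x
    set z : S3 := ⟨ω ^ n • (x : E2), hmem⟩ with hz
    have h1 : (y : E2) = ω • (z : E2) := by
      rw [h, hz, smul_smul, pow_succ, mul_comm]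
    have h2 : Quot.mk RL z = Quot.mk RL y := Quot.sound (h1 : RL z y)
    rw [← h2]
    exact ih x z rfl

lemma mk_smul_zpow (k : ℤ) (x y : S3) (h : (y : E2) = ω ^ k • (x : E2)) :
    Quot.mk RL y = Quot.mk RL x := by
  have h3 : ω ^ (3 : ℤ) = 1 := by exact_mod_cast omega_cube
  obtain ⟨s, hs⟩ : ∃ s : ℕ, ω ^ k = ω ^ s := by
    refine ⟨(k % 3).toNat, ?_⟩
    have hk : k = 3 * (k / 3) + k % 3 := (Int.mul_ediv_add_emod k 3).symm
    have hnn : 0 ≤ k % 3 := Int.emod_nonneg k (by norm_num)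
    calc ω ^ k = ω ^ (3 * (k / 3) + k % 3) := by rw [← hk]
    _ = (ω ^ (3:ℤ)) ^ (k / 3) * ω ^ (k % 3) := by
        rw [← zpow_mul, ← zpow_add₀ omega_ne_zero]
    _ = ω ^ (k % 3) := by rw [h3, one_zpow, one_mul]
    _ = ω ^ (k % 3).toNat := by
        rw [← zpow_natCast]
        congr 1
        omega
  exact mk_smul_pow s x y (by rw [h, hs])

lemma eqL {x y : S3} (h : Quot.mk RL x = Quot.mk RL y) :
    ∃ k : ℤ, (y : E2) = ω ^ k • (x : E2) := by
  have hE : Equivalence (fun a b : S3 => ∃ k : ℤ, (b : E2) = ω ^ k • (a : E2)) := by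
    constructor
    · intro a; exact ⟨0, by rw [zpow_zero, one_smul]⟩
    · rintro a b ⟨k, hk⟩
      refine ⟨-k, ?_⟩
      rw [hk, smul_smul, ← zpow_add₀ omega_ne_zero]
      simp
    · rintro a b c ⟨k, hk⟩ ⟨l, hl⟩
      refine ⟨l + k, ?_⟩
      rw [hl, hk, smul_smul, ← zpow_add₀ omega_ne_zero]
  have hgen := Quot.eqvGen_exact h
  have hsub : ∀ a b : S3, RL a b → ∃ k : ℤ, (b : E2) = ω ^ k • (a : E2) := by
    intro a b hab
    exact ⟨1, by rw [zpow_one]; exact hab⟩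
  exact (hE.eqvGen_iff).mp (Relation.EqvGen.mono hsub _ _ hgen)

/-! ### the open book side -/

abbrev Sc := Metric.sphere (0:ℂ) 1
abbrev It := Set.Icc (0:ℝ) 1
abbrev Dom := (Sc × It) × It

def ROb : Dom → Dom → Prop := fun p q =>
  (p.2.1 = 1 ∧ q.2.1 = 0 ∧
    (q.1.1 : ℂ) = Complex.exp (6 * Real.pi * (p.1.2.1 : ℝ) * Complex.I) * p.1.1 ∧
    q.1.2 = p.1.2) ∨
  ((p.1.2.1 = 0 ∨ p.1.2.1 = 1) ∧ q.1 = p.1)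

lemma abs_coe_sphere (z : Sc) : ‖(z : ℂ)‖ = 1 := by
  have := z.2
  rw [mem_sphere_zero_iff_norm] at this
  simpa using this

lemma exp_arg_sphere (z : Sc) :
    Complex.exp (((Complex.arg (z:ℂ) : ℝ) : ℂ) * Complex.I) = (z : ℂ) := by
  have h := Complex.norm_mul_exp_arg_mul_I (z : ℂ)
  rw [abs_coe_sphere] at h
  simpa using h

def G (p : Dom) : Quot RL :=
  Quot.mk RL (Fs (Complex.arg (p.1.1 : ℂ)) p.1.2.1 p.2.1)

lemma mkFs_congr {φ φ' : ℝ} (r t : ℝ)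
    (h : Complex.exp ((φ:ℂ) * Complex.I) = Complex.exp ((φ':ℂ) * Complex.I)) :
    Quot.mk RL (Fs φ r t) = Quot.mk RL (Fs φ' r t) := by
  obtain ⟨n, hn⟩ := exp_I_inj.mp h
  apply mk_smul_zpow n
  show F0 φ r t = ω ^ n • F0 φ' r t
  rw [hn, F0_shift]

lemma G_spec (φ : ℝ) (z : Sc) (r t : It)
    (hz : Complex.exp ((φ:ℂ) * Complex.I) = (z : ℂ)) :
    G ((z, r), t) = Quot.mk RL (Fs φ r.1 t.1) := by
  apply mkFs_congr
  rw [exp_arg_sphere, hz]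

lemma G_resp : ∀ p q : Dom, ROb p q → G p = G q := by
  rintro ⟨⟨z, r⟩, t⟩ ⟨⟨z', r'⟩, t'⟩ (⟨ht1, ht0, hz', hr⟩ | ⟨hb, hq⟩)
  · -- monodromy
    simp only at ht1 ht0 hz' hr
    subst hr
    rw [G, G]
    simp only [ht1, ht0]
    have hz : Complex.exp (((Complex.arg (z:ℂ) : ℝ):ℂ) * Complex.I) = (z:ℂ) :=
      exp_arg_sphere z
    have hz'2 : Complex.exp ((((Complex.arg (z:ℂ) + 6 * π * r'.1 : ℝ)):ℂ) * Complex.I) = (z' : ℂ) := by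
      rw [hz']
      push_cast
      rw [add_mul, Complex.exp_add, hz]
      ring
    have step1 : Quot.mk RL (Fs (Complex.arg (z:ℂ)) r'.1 1) =
        Quot.mk RL (Fs (Complex.arg (z:ℂ) + 6 * π * r'.1) r'.1 0) := by
      show Quot.mk RL ⟨F0 _ r'.1 1, _⟩ = Quot.mk RL ⟨F0 _ r'.1 0, _⟩
      congr 1
      exact Subtype.ext (F0_mono _ _)
    rw [step1]
    apply mkFs_congr
    rw [hz'2, exp_arg_sphere]
  · -- boundary
    have hzz : z' = z := congrArg Prod.fst hq
    have hrr : r' = r := congrArg Prod.snd hq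
    subst hzz; subst hrr
    rw [G, G]
    simp only
    congr 1
    apply Subtype.ext
    rcases hb with h0 | h1
    · simp only at h0
      rw [h0]
      exact F0_bdry0 _ _ _
    · simp only at h1
      rw [h1]
      exact F0_bdry1 _ _ _

/-! ### continuity of G -/

def G' (p : Dom) : Quot RL :=
  Quot.mk RL (Fs (π + Complex.arg (-(p.1.1 : ℂ))) p.1.2.1 p.2.1)

lemma exp_neg_arg (z : Sc) :
    Complex.exp ((((π + Complex.arg (-(z:ℂ)) : ℝ)):ℂ) * Complex.I) = (z : ℂ) := by
  have habs : ‖-(z:ℂ)‖ = 1 := by rw [norm_neg]; exact abs_coe_sphere z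
  have h := Complex.norm_mul_exp_arg_mul_I (-(z : ℂ))
  rw [habs] at h
  push_cast
  rw [add_mul, Complex.exp_add, Complex.exp_pi_mul_I]
  simp only [Complex.ofReal_one, one_mul] at h
  rw [h]
  ring

lemma G_eq_G' : G = G' := by
  funext p
  obtain ⟨⟨z, r⟩, t⟩ := p
  rw [G, G']
  apply mkFs_congr
  rw [exp_arg_sphere, exp_neg_arg]

def T (p : Dom) : ℝ × ℝ × ℝ := (Complex.arg (p.1.1 : ℂ), p.1.2.1, p.2.1)
def T' (p : Dom) : ℝ × ℝ × ℝ := (π + Complex.arg (-(p.1.1 : ℂ)), p.1.2.1, p.2.1)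

lemma cont_coe_z : Continuous (fun p : Dom => (p.1.1 : ℂ)) :=
  continuous_subtype_val.comp (continuous_fst.comp continuous_fst)

lemma cont_rest : Continuous (fun p : Dom => ((p.1.2.1 : ℝ), (p.2.1 : ℝ))) := by
  apply Continuous.prodMk
  · exact continuous_subtype_val.comp (continuous_snd.comp continuous_fst)
  · exact continuous_subtype_val.comp continuous_snd

lemma G_cont : Continuous G := by
  rw [continuous_iff_continuousAt]
  intro p
  by_cases hp : (p.1.1 : ℂ) ∈ Complex.slitPlane
  · have hT : ContinuousAt T p := by
      apply ContinuousAt.prodMk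
      · show ContinuousAt (Complex.arg ∘ (fun q : Dom => (q.1.1 : ℂ))) p
        exact ContinuousAt.comp (Complex.continuousAt_arg hp) cont_coe_z.continuousAt
      · exact cont_rest.continuousAt
    have hG : G = (fun q : ℝ × ℝ × ℝ => Quot.mk RL (Fs q.1 q.2.1 q.2.2)) ∘ T := rfl
    rw [hG]
    exact ((continuous_quot_mk.comp Fs_cont).continuousAt).comp hT
  · have hneg : -(p.1.1 : ℂ) ∈ Complex.slitPlane := by
      rw [Complex.mem_slitPlane_iff] at hp ⊢
      push_neg at hp
      obtain ⟨h1, h2⟩ := hp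
      have hz0 : (p.1.1 : ℂ) ≠ 0 := by
        intro h
        have := abs_coe_sphere p.1.1
        rw [h] at this
        simp at this
      left
      simp only [Complex.neg_re, neg_pos]
      rcases lt_or_eq_of_le h1 with h | h
      · exact h
      · exfalso
        apply hz0
        apply Complex.ext
        · simpa using h
        · simpa using h2
    have hT : ContinuousAt T' p := by
      apply ContinuousAt.prodMk
      · show ContinuousAt ((fun w : ℂ => π + Complex.arg (-w)) ∘ (fun q : Dom => (q.1.1 : ℂ))) p
        apply ContinuousAt.comp ?_ cont_coe_z.continuousAt
        apply ContinuousAt.add continuousAt_const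
        show ContinuousAt (Complex.arg ∘ (fun w : ℂ => -w)) _
        exact ContinuousAt.comp (by simpa using Complex.continuousAt_arg hneg)
          continuous_neg.continuousAt
      · exact cont_rest.continuousAt
    have hG : G = (fun q : ℝ × ℝ × ℝ => Quot.mk RL (Fs q.1 q.2.1 q.2.2)) ∘ T' := by
      rw [G_eq_G']; rfl
    rw [hG]
    exact ((continuous_quot_mk.comp Fs_cont).continuousAt).comp hT

/-! ### surjectivity -/

lemma A1_eq (φ r t : ℝ) (c : ℂ) (hm : Real.cos (π*r/2) = ‖c‖)
    (hθ : c ≠ 0 → ∃ n : ℤ, φ/3 + 2*π*r*t = Complex.arg c + 2*π*n) :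
    A1 φ r t = c := by
  by_cases hc : c = 0
  · subst hc
    rw [A1, hm]
    simp
  · obtain ⟨n, hn⟩ := hθ hc
    rw [A1, hm, hn, exp_I_periodic, Complex.norm_mul_exp_arg_mul_I]

lemma A2_eq (φ r t : ℝ) (c : ℂ) (hm : Real.sin (π*r/2) = ‖c‖)
    (hθ : c ≠ 0 → ∃ n : ℤ, φ/3 + 2*π*(r-1)*t = Complex.arg c + 2*π*n) :
    A2 φ r t = c := by
  by_cases hc : c = 0
  · subst hc
    rw [A2, hm]
    simp
  · obtain ⟨n, hn⟩ := hθ hc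
    rw [A2, hm, hn, exp_I_periodic, Complex.norm_mul_exp_arg_mul_I]

lemma G_surj : ∀ x : S3, ∃ p : Dom, G p = Quot.mk RL x := by
  intro x
  set x0 := (x : E2) 0 with hx0def
  set x1 := (x : E2) 1 with hx1def
  have hn := mem_sphere_zero_iff_norm.mp x.2
  rw [EuclideanSpace.norm_eq, Fin.sum_univ_two] at hn
  have habs : ‖x0‖ ^ 2 + ‖x1‖ ^ 2 = 1 := by
    have := Real.sqrt_eq_one.mp hn
    simpa using this
  have habs0 : 0 ≤ ‖x0‖ := norm_nonneg _
  have habs1 : 0 ≤ ‖x1‖ := norm_nonneg _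
  have hm1 : ‖x1‖ ≤ 1 := by nlinarith
  set r : ℝ := 2/π * Real.arcsin (‖x1‖) with hrdef
  have hπ := Real.pi_pos
  have hr0 : 0 ≤ r := by
    apply mul_nonneg (by positivity)
    exact Real.arcsin_nonneg.mpr habs1
  have hr1 : r ≤ 1 := by
    have h := Real.arcsin_le_pi_div_two (‖x1‖)
    rw [hrdef]
    rw [show (1:ℝ) = 2/π * (π/2) by field_simp]
    apply mul_le_mul_of_nonneg_left h (by positivity)
  have hhalf : π * r / 2 = Real.arcsin (‖x1‖) := by
    rw [hrdef]; field_simp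
  have hsin : Real.sin (π*r/2) = ‖x1‖ := by
    rw [hhalf]; exact Real.sin_arcsin (by linarith) hm1
  have hcos : Real.cos (π*r/2) = ‖x0‖ := by
    rw [hhalf, Real.cos_arcsin]
    rw [show 1 - ‖x1‖ ^ 2 = ‖x0‖ ^ 2 by linarith]
    exact Real.sqrt_sq habs0
  -- choose φ and t
  have main : ∃ (φ t : ℝ), 0 ≤ t ∧ t ≤ 1 ∧ F0 φ r t = (x : E2) := by
    by_cases hx1 : x1 = 0
    · refine ⟨3 * Complex.arg x0, 0, le_refl 0, zero_le_one, ?_⟩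
      refine PiLp.ext fun i => ?_
      by_cases hi : i = 0
      · subst hi
        rw [F0_apply0, ← hx0def]
        apply A1_eq _ _ _ _ hcos
        intro _
        exact ⟨0, by push_cast; ring⟩
      · have hi1 : i = 1 := by omega
        subst hi1
        rw [F0_apply1, ← hx1def]
        apply A2_eq _ _ _ _ (by rw [hsin, hx1])
        intro hc
        exact absurd hx1 hc
    · by_cases hx0 : x0 = 0
      · refine ⟨3 * Complex.arg x1, 0, le_refl 0, zero_le_one, ?_⟩
        refine PiLp.ext fun i => ?_
        by_cases hi : i = 0
        · subst hi
          rw [F0_apply0, ← hx0def]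
          apply A1_eq _ _ _ _ (by rw [hcos, hx0])
          intro hc
          exact absurd hx0 hc
        · have hi1 : i = 1 := by omega
          subst hi1
          rw [F0_apply1, ← hx1def]
          apply A2_eq _ _ _ _ hsin
          intro _
          exact ⟨0, by push_cast; ring⟩
      · set u : ℝ := (Complex.arg x0 - Complex.arg x1)/(2*π) with hudef
        set t : ℝ := Int.fract u with htdef
        refine ⟨3 * (Complex.arg x0 - 2*π*r*t), t, Int.fract_nonneg u, (Int.fract_lt_one u).le, ?_⟩
        refine PiLp.ext fun i => ?_
        by_cases hi : i = 0
        · subst hi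
          rw [F0_apply0, ← hx0def]
          apply A1_eq _ _ _ _ hcos
          intro _
          exact ⟨0, by push_cast; ring⟩
        · have hi1 : i = 1 := by omega
          subst hi1
          rw [F0_apply1, ← hx1def]
          apply A2_eq _ _ _ _ hsin
          intro _
          refine ⟨⌊u⌋, ?_⟩
          have hfr : t = u - ⌊u⌋ := (Int.self_sub_floor u).symm
          have h2π : (2*π) ≠ 0 := by positivity
          have h2u : 2*π*u = Complex.arg x0 - Complex.arg x1 := by
            rw [hudef]; field_simp
          have : 2*π*t = Complex.arg x0 - Complex.arg x1 - 2*π*⌊u⌋ := by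
            rw [hfr]; rw [mul_sub, h2u]
          linarith [this]
  obtain ⟨φ, t, ht0, ht1, hF⟩ := main
  refine ⟨((⟨Complex.exp ((φ:ℂ) * Complex.I), ?_⟩, ⟨r, hr0, hr1⟩), ⟨t, ht0, ht1⟩), ?_⟩
  · rw [mem_sphere_zero_iff_norm]
    simp [Complex.norm_exp_ofReal_mul_I]
  · rw [G_spec φ _ _ _ rfl]
    congr 1
    exact Subtype.ext hF

/-! ### injectivity -/

lemma exp_eq_omega {θ θ' : ℝ} {k : ℤ}
    (h : Complex.exp ((θ':ℂ) * Complex.I) = ω^k * Complex.exp ((θ:ℂ) * Complex.I)) :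
    ∃ n : ℤ, θ' = θ + 2*π*k/3 + 2*π*n := by
  rw [omega_zpow_mul_exp] at h
  obtain ⟨n, hn⟩ := exp_I_inj.mp h
  exact ⟨n, by linarith⟩

lemma r_eq_of_sin {r r' : ℝ} (hr : r ∈ Set.Icc (0:ℝ) 1) (hr' : r' ∈ Set.Icc (0:ℝ) 1)
    (h : Real.sin (π*r/2) = Real.sin (π*r'/2)) : r = r' := by
  have hπ := Real.pi_pos
  have h1 : π*r/2 ∈ Set.Icc (-(π/2)) (π/2) := by
    constructor <;> nlinarith [hr.1, hr.2]
  have h2 : π*r'/2 ∈ Set.Icc (-(π/2)) (π/2) := by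
    constructor <;> nlinarith [hr'.1, hr'.2]
  have := Real.injOn_sin h1 h2 h
  have hπ' := Real.pi_ne_zero
  have : π * r = π * r' := by linarith
  exact mul_left_cancel₀ hπ' this

lemma sin_nonneg_r {r : ℝ} (hr : r ∈ Set.Icc (0:ℝ) 1) : 0 ≤ Real.sin (π*r/2) := by
  have hπ := Real.pi_pos
  apply Real.sin_nonneg_of_nonneg_of_le_pi <;> nlinarith [hr.1, hr.2]

lemma cos_nonneg_r {r : ℝ} (hr : r ∈ Set.Icc (0:ℝ) 1) : 0 ≤ Real.cos (π*r/2) := by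
  have hπ := Real.pi_pos
  apply Real.cos_nonneg_of_mem_Icc
  constructor <;> nlinarith [hr.1, hr.2]

lemma exp_sphere_eq {z z' : Sc} {d : ℝ}
    (h : Complex.arg (z':ℂ) = Complex.arg (z:ℂ) + d)
    (hd : ∃ n : ℤ, d = 2*π*n) : (z' : ℂ) = (z : ℂ) := by
  obtain ⟨n, hn⟩ := hd
  rw [← exp_arg_sphere z', ← exp_arg_sphere z, h, hn, exp_I_periodic]

lemma G_inj : ∀ a b : Dom, G a = G b → Quot.mk ROb a = Quot.mk ROb b := by
  rintro ⟨⟨za, ra⟩, ta⟩ ⟨⟨zb, rb⟩, tb⟩ hG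
  rw [G, G] at hG
  simp only at hG
  obtain ⟨k, hk⟩ := eqL hG
  set φa := Complex.arg (za : ℂ) with hφa
  set φb := Complex.arg (zb : ℂ) with hφb
  have hFk : F0 φb rb.1 tb.1 = ω^k • F0 φa ra.1 ta.1 := hk
  have h1 : A1 φb rb.1 tb.1 = ω^k * A1 φa ra.1 ta.1 := congrArg (fun v : E2 => v 0) hFk
  have h2 : A2 φb rb.1 tb.1 = ω^k * A2 φa ra.1 ta.1 := congrArg (fun v : E2 => v 1) hFk
  have hsin : Real.sin (π*rb.1/2) = Real.sin (π*ra.1/2) := by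
    have := congrArg norm h2
    rw [abs_A2, norm_mul, abs_omega_zpow, one_mul, abs_A2,
      _root_.abs_of_nonneg (sin_nonneg_r rb.2), _root_.abs_of_nonneg (sin_nonneg_r ra.2)] at this
    exact this
  have hrr : rb = ra := Subtype.ext (r_eq_of_sin rb.2 ra.2 hsin)
  subst hrr
  have hπ := Real.pi_pos
  rcases eq_or_lt_of_le rb.2.1 with hr0 | hrpos
  · -- r = 0 : boundary
    have hr0' : rb.1 = 0 := hr0.symm
    have hcos1 : Real.cos (π*rb.1/2) = 1 := by rw [hr0']; norm_num
    have hexp : Complex.exp ((((φb/3 + 2*π*rb.1*tb.1 : ℝ)):ℂ) * Complex.I)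
        = ω^k * Complex.exp ((((φa/3 + 2*π*rb.1*ta.1 : ℝ)):ℂ) * Complex.I) := by
      have hh := h1
      rw [A1, A1, hcos1] at hh
      simpa using hh
    obtain ⟨n, hn⟩ := exp_eq_omega hexp
    rw [hr0'] at hn
    have hφ : φb = φa + 2*π*((k + 3*n : ℤ) : ℝ) := by
      push_cast
      linear_combination 3*hn
    have hz : (zb : ℂ) = (za : ℂ) := exp_sphere_eq hφ ⟨k + 3*n, rfl⟩
    apply Quot.sound
    right
    exact ⟨Or.inl hr0', by rw [Prod.ext_iff]; exact ⟨Subtype.ext hz, rfl⟩⟩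
  rcases eq_or_lt_of_le rb.2.2 with hr1 | hrlt
  · -- r = 1 : boundary
    have hsin1 : Real.sin (π*rb.1/2) = 1 := by
      rw [hr1, show π*1/2 = π/2 by ring]; norm_num
    have hexp : Complex.exp ((((φb/3 + 2*π*(rb.1-1)*tb.1 : ℝ)):ℂ) * Complex.I)
        = ω^k * Complex.exp ((((φa/3 + 2*π*(rb.1-1)*ta.1 : ℝ)):ℂ) * Complex.I) := by
      have hh := h2
      rw [A2, A2, hsin1] at hh
      simpa using hh
    obtain ⟨n, hn⟩ := exp_eq_omega hexp
    rw [hr1] at hn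
    have hφ : φb = φa + 2*π*((k + 3*n : ℤ) : ℝ) := by
      push_cast
      linear_combination 3*hn
    have hz : (zb : ℂ) = (za : ℂ) := exp_sphere_eq hφ ⟨k + 3*n, rfl⟩
    apply Quot.sound
    right
    exact ⟨Or.inr hr1, by rw [Prod.ext_iff]; exact ⟨Subtype.ext hz, rfl⟩⟩
  · -- 0 < r < 1 : interior
    have hcospos : 0 < Real.cos (π*rb.1/2) := by
      apply Real.cos_pos_of_mem_Ioo
      constructor <;> nlinarith
    have hsinpos : 0 < Real.sin (π*rb.1/2) := by
      apply Real.sin_pos_of_pos_of_lt_pi <;> nlinarith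
    have hexp1 : Complex.exp ((((φb/3 + 2*π*rb.1*tb.1 : ℝ)):ℂ) * Complex.I)
        = ω^k * Complex.exp ((((φa/3 + 2*π*rb.1*ta.1 : ℝ)):ℂ) * Complex.I) := by
      have hh := h1
      rw [A1, A1] at hh
      have hcne : ((Real.cos (π*rb.1/2) : ℝ) : ℂ) ≠ 0 :=
        Complex.ofReal_ne_zero.mpr (ne_of_gt hcospos)
      apply mul_left_cancel₀ hcne
      rw [hh]; ring
    have hexp2 : Complex.exp ((((φb/3 + 2*π*(rb.1-1)*tb.1 : ℝ)):ℂ) * Complex.I)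
        = ω^k * Complex.exp ((((φa/3 + 2*π*(rb.1-1)*ta.1 : ℝ)):ℂ) * Complex.I) := by
      have hh := h2
      rw [A2, A2] at hh
      have hsne : ((Real.sin (π*rb.1/2) : ℝ) : ℂ) ≠ 0 :=
        Complex.ofReal_ne_zero.mpr (ne_of_gt hsinpos)
      apply mul_left_cancel₀ hsne
      rw [hh]; ring
    obtain ⟨n1, hn1⟩ := exp_eq_omega hexp1
    obtain ⟨n2, hn2⟩ := exp_eq_omega hexp2
    have hπ' : (2*π) ≠ 0 := by positivity
    have htm : tb.1 = ta.1 + ((n1 - n2 : ℤ) : ℝ) := by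
      have key : 2*π*tb.1 = 2*π*(ta.1 + ((n1 - n2 : ℤ) : ℝ)) := by
        push_cast
        linear_combination hn1 - hn2
      exact mul_left_cancel₀ hπ' key
    have hmcases : n1 - n2 = -1 ∨ n1 - n2 = 0 ∨ n1 - n2 = 1 := by
      have hb1 : (-1 : ℝ) ≤ ((n1 - n2 : ℤ) : ℝ) := by
        have := ta.2.2; have := tb.2.1
        linarith [htm]
      have hb2 : ((n1 - n2 : ℤ) : ℝ) ≤ 1 := by
        have := ta.2.1; have := tb.2.2
        linarith [htm]
      have hb1' : (-1 : ℤ) ≤ n1 - n2 := by exact_mod_cast hb1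
      have hb2' : n1 - n2 ≤ 1 := by exact_mod_cast hb2
      omega
    rcases hmcases with hm | hm | hm
    · -- ta = 1, tb = 0 : monodromy a → b
      rw [hm] at htm
      push_cast at htm
      have hta : ta.1 = 1 := by
        have := ta.2.2; have := tb.2.1
        linarith
      have htb : tb.1 = 0 := by
        have := ta.2.2; have := tb.2.1
        linarith
      apply Quot.sound
      left
      refine ⟨hta, htb, ?_, rfl⟩
      show (zb : ℂ) = Complex.exp (6 * π * (rb.1 : ℝ) * Complex.I) * (za : ℂ)
      rw [hta, htb] at hn1
      have hφ : φb = (φa + 6*π*rb.1) + 2*π*((k + 3*n1 : ℤ) : ℝ) := by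
        push_cast
        linear_combination 3*hn1
      calc (zb : ℂ) = Complex.exp ((φb : ℂ) * Complex.I) := (exp_arg_sphere zb).symm
        _ = Complex.exp ((((φa + 6*π*rb.1) + 2*π*((k + 3*n1 : ℤ) : ℝ) : ℝ) : ℂ) * Complex.I) := by
            rw [← hφ]
        _ = Complex.exp (((φa + 6*π*rb.1 : ℝ) : ℂ) * Complex.I) := exp_I_periodic _ _
        _ = Complex.exp (6 * π * (rb.1 : ℝ) * Complex.I) * (za : ℂ) := by
            push_cast
            rw [add_mul, Complex.exp_add, exp_arg_sphere za]
            ring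
    · -- same point
      rw [hm] at htm
      push_cast at htm
      have htt : tb = ta := Subtype.ext (by linarith)
      rw [htt] at hn1
      have hφ : φb = φa + 2*π*((k + 3*n1 : ℤ) : ℝ) := by
        push_cast
        linear_combination 3*hn1
      have hz : zb = za := Subtype.ext (exp_sphere_eq hφ ⟨k + 3*n1, rfl⟩)
      rw [htt, hz]
    · -- ta = 0, tb = 1 : monodromy b → a
      rw [hm] at htm
      push_cast at htm
      have hta : ta.1 = 0 := by
        have := ta.2.1; have := tb.2.2
        linarith
      have htb : tb.1 = 1 := by
        have := ta.2.1; have := tb.2.2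
        linarith
      symm
      apply Quot.sound
      left
      refine ⟨htb, hta, ?_, rfl⟩
      show (za : ℂ) = Complex.exp (6 * π * (rb.1 : ℝ) * Complex.I) * (zb : ℂ)
      rw [hta, htb] at hn1
      have hφ : φa = (φb + 6*π*rb.1) + 2*π*((-(k + 3*n1) : ℤ) : ℝ) := by
        push_cast
        linear_combination -3*hn1
      calc (za : ℂ) = Complex.exp ((φa : ℂ) * Complex.I) := (exp_arg_sphere za).symm
        _ = Complex.exp ((((φb + 6*π*rb.1) + 2*π*((-(k + 3*n1) : ℤ) : ℝ) : ℝ) : ℂ) * Complex.I) := by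
            rw [← hφ]
        _ = Complex.exp (((φb + 6*π*rb.1 : ℝ) : ℂ) * Complex.I) := exp_I_periodic _ _
        _ = Complex.exp (6 * π * (rb.1 : ℝ) * Complex.I) * (zb : ℂ) := by
            push_cast
            rw [add_mul, Complex.exp_add, exp_arg_sphere zb]
            ring

/-! ### Hausdorffness of the lens space -/

def Ψ (x : S3) : ℂ × ℂ × ℂ :=
  (((x:E2) 0)^3, ((x:E2) 1)^3, (x:E2) 0 * (starRingEnd ℂ) ((x:E2) 1))

lemma omega_mul_conj : ω * (starRingEnd ℂ) ω = 1 := by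
  rw [Complex.mul_conj]
  rw [Complex.normSq_eq_norm_sq, omega_abs]
  norm_num

lemma Ψ_resp : ∀ x y : S3, RL x y → Ψ x = Ψ y := by
  intro x y hxy
  have h : (y : E2) = ω • (x : E2) := hxy
  have h0 : (y:E2) 0 = ω * (x:E2) 0 := by rw [h]; rfl
  have h1 : (y:E2) 1 = ω * (x:E2) 1 := by rw [h]; rfl
  rw [Ψ, Ψ, h0, h1]
  refine Prod.ext ?_ (Prod.ext ?_ ?_) <;> simp only
  · rw [mul_pow, omega_cube, one_mul]
  · rw [mul_pow, omega_cube, one_mul]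
  · rw [map_mul]
    linear_combination (-((x:E2) 0 * (starRingEnd ℂ) ((x:E2) 1))) * omega_mul_conj
  
lemma omega_pow_mul_conj (s : ℕ) : ω^s * (starRingEnd ℂ) (ω^s) = 1 := by
  rw [Complex.mul_conj, Complex.normSq_eq_norm_sq, abs_omega_pow]
  norm_num

lemma Ψ_inj : ∀ x y : S3, Ψ x = Ψ y → Quot.mk RL x = Quot.mk RL y := by
  intro x y h
  rw [Ψ, Ψ, Prod.ext_iff, Prod.ext_iff] at h
  obtain ⟨e1, e2, e3⟩ := h
  simp only at e1 e2 e3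
  obtain ⟨s, hs⟩ := cube_roots (x := (x:E2) 0) (y := (y:E2) 0) e1.symm
  by_cases hx0 : (x:E2) 0 = 0
  · -- x0 = 0, use second coordinate
    have hy0 : (y:E2) 0 = 0 := by rw [hs, hx0, mul_zero]
    obtain ⟨s', hs'⟩ := cube_roots (x := (x:E2) 1) (y := (y:E2) 1) e2.symm
    symm
    apply mk_smul_pow s' x y
    refine PiLp.ext fun i => ?_
    rw [smul_apply2]
    by_cases hi : i = 0
    · subst hi; rw [hy0, hx0, mul_zero]
    · have hi1 : i = 1 := by omega
      subst hi1; exact hs'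
  · -- x0 ≠ 0
    have hy1 : (y:E2) 1 = ω^s * (x:E2) 1 := by
      -- from e3 : x0 * conj x1 = y0 * conj y1 and y0 = ω^s x0
      have hconj : (starRingEnd ℂ) ((x:E2) 1) = ω^s * (starRingEnd ℂ) ((y:E2) 1) := by
        apply mul_left_cancel₀ hx0
        rw [e3, hs]
        ring
      have := congrArg (starRingEnd ℂ) hconj
      rw [map_mul, Complex.conj_conj, Complex.conj_conj] at this
      rw [this]
      linear_combination (-((y:E2) 1)) * omega_pow_mul_conj s
    symm
    apply mk_smul_pow s x y
    refine PiLp.ext fun i => ?_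
    rw [smul_apply2]
    by_cases hi : i = 0
    · subst hi; exact hs
    · have hi1 : i = 1 := by omega
      subst hi1; exact hy1

lemma Ψ_cont : Continuous Ψ := by
  have h0 : Continuous (fun x : S3 => (x:E2) 0) :=
    (continuous_apply (0 : Fin 2)).comp ((PiLp.continuous_ofLp 2 (fun _ : Fin 2 => ℂ)).comp continuous_subtype_val)
  have h1 : Continuous (fun x : S3 => (x:E2) 1) :=
    (continuous_apply (1 : Fin 2)).comp ((PiLp.continuous_ofLp 2 (fun _ : Fin 2 => ℂ)).comp continuous_subtype_val)
  unfold Ψ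
  exact ((h0.pow 3).prodMk ((h1.pow 3).prodMk (h0.mul (Complex.continuous_conj.comp h1))))

lemma T2_QuotRL : T2Space (Quot RL) := by
  have hcont : Continuous (Quot.lift Ψ Ψ_resp) := continuous_quot_lift _ Ψ_cont
  have hinj : Function.Injective (Quot.lift Ψ Ψ_resp) := by
    intro u v
    induction u using Quot.ind with | _ x =>
    induction v using Quot.ind with | _ y =>
    intro h
    exact Ψ_inj x y h
  exact T2Space.of_injective_continuous hinj hcont

lemma compact_QuotROb : CompactSpace (Quot ROb) := by
  constructor
  have h : (Set.univ : Set (Quot ROb)) = Set.range (Quot.mk ROb) :=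
    ((Set.range_eq_univ).mpr (Quot.mk_surjective (r := ROb))).symm
  rw [h]
  exact isCompact_range continuous_quot_mk

/-! ### assembly -/

def liftG : Quot ROb → Quot RL := Quot.lift G G_resp

lemma liftG_cont : Continuous liftG := continuous_quot_lift _ G_cont

lemma liftG_inj : Function.Injective liftG := by
  intro u v
  induction u using Quot.ind with | _ a =>
  induction v using Quot.ind with | _ b =>
  intro h
  exact G_inj a b h

lemma liftG_surj : Function.Surjective liftG := by
  intro q
  induction q using Quot.ind with | _ x =>
  obtain ⟨p, hp⟩ := G_surj x
  exact ⟨Quot.mk ROb p, hp⟩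

def obHomeo : Quot ROb ≃ₜ Quot RL :=
  letI := compact_QuotROb
  letI := T2_QuotRL
  Continuous.homeoOfEquivCompactToT2
    (f := Equiv.ofBijective liftG ⟨liftG_inj, liftG_surj⟩) liftG_cont

end OB7

end

/-- The open book with page the annulus `S¹ × [0,1]` and monodromy the
composition of three Dehn twists along the core, `ψ(z,r) = (e^{6πir}·z, r)`, is the lens
space `L(3,1)`. -/
theorem open_book_of_annulus_three_dehn_twists :
    Nonempty (
      -- the open book Ob(S¹ × [0,1], S¹ × {0,1}, ψ)
      Quot (fun p q : (Metric.sphere (0:ℂ) 1 × Set.Icc (0:ℝ) 1) × Set.Icc (0:ℝ) 1 =>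
        (p.2.1 = 1 ∧ q.2.1 = 0 ∧
          (q.1.1 : ℂ) = Complex.exp (6 * Real.pi * (p.1.2.1 : ℝ) * Complex.I) * p.1.1 ∧
          q.1.2 = p.1.2) ∨
        ((p.1.2.1 = 0 ∨ p.1.2.1 = 1) ∧ q.1 = p.1))
      ≃ₜ
      -- the lens space L(3,1) = S³ / (ℤ/3ℤ)
      Quot (fun p q : Metric.sphere (0 : EuclideanSpace ℂ (Fin 2)) 1 =>
        (q : EuclideanSpace ℂ (Fin 2)) =
          Complex.exp (2 * Real.pi * Complex.I / 3) • (p : EuclideanSpace ℂ (Fin 2)))) := by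
  exact ⟨OB7.obHomeo⟩
end

section
/- The half open book with page the punctured ball S² × [0,1] is homeomorphic to S² × D²: the quotient of (S² × [0,1]) × [0,1/2] by the equivalence relation generated by ((x,e),t) ∼ ((x,e),t′) for all x ∈ S², e ∈ {0,1}, t,t′ ∈ [0,1/2] is homeomorphic to S² × D², where S² is the unit sphere in ℝ³ and D² is the closed unit disk in ℝ². -/
noncomputable def gmap (e t : ℝ) : EuclideanSpace ℝ (Fin 2) :=
  (WithLp.equiv 2 (Fin 2 → ℝ)).symm ![2*e-1, (4*t-1)*(2*Real.sqrt (e*(1-e)))]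

lemma gmap_apply0 (e t : ℝ) : gmap e t 0 = 2*e-1 := rfl
lemma gmap_apply1 (e t : ℝ) : gmap e t 1 = (4*t-1)*(2*Real.sqrt (e*(1-e))) := rfl

lemma continuous_gmap : Continuous (fun p : ℝ × ℝ => gmap p.1 p.2) := by
  apply (PiLp.continuous_toLp 2 (fun _ : Fin 2 => ℝ)).comp
  refine continuous_pi ?_
  intro i
  fin_cases i <;> simp <;> fun_prop

lemma norm_gmap_sq (e t : ℝ) :
    ‖gmap e t‖^2 = (2*e-1)^2 + ((4*t-1)*(2*Real.sqrt (e*(1-e))))^2 := by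
  rw [EuclideanSpace.norm_eq]
  rw [Real.sq_sqrt (by positivity)]
  simp [Fin.sum_univ_two, gmap_apply0, gmap_apply1, sq_abs]

lemma gmap_mem {e t : ℝ} (he : e ∈ Set.Icc (0:ℝ) 1) (ht : t ∈ Set.Icc (0:ℝ) (1/2)) :
    gmap e t ∈ Metric.closedBall (0 : EuclideanSpace ℝ (Fin 2)) 1 := by
  rw [Metric.mem_closedBall, dist_zero_right]
  have h1 : Real.sqrt (e*(1-e)) ^ 2 = e*(1-e) :=
    Real.sq_sqrt (by nlinarith [he.1, he.2])
  have h3 : (4*t-1)^2 ≤ 1 := by nlinarith [ht.1, ht.2]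
  have key : ((4*t-1)*(2*Real.sqrt (e*(1-e))))^2 = (4*t-1)^2 * (4*(e*(1-e))) := by
    rw [mul_pow, mul_pow, h1]; ring
  have h4 : (0:ℝ) ≤ 4*(e*(1-e)) := by nlinarith [he.1, he.2]
  have h2 : ‖gmap e t‖^2 ≤ 1 := by
    rw [norm_gmap_sq, key]
    nlinarith [mul_nonneg (sub_nonneg.mpr h3) h4]
  nlinarith [norm_nonneg (gmap e t)]

lemma gmap_edge {e : ℝ} (he : e = 0 ∨ e = 1) (t t' : ℝ) : gmap e t = gmap e t' := by
  unfold gmap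
  rcases he with h | h <;> subst h <;> norm_num

lemma sqrt_four : Real.sqrt 4 = 2 := by
  rw [show (4:ℝ) = 2^2 by norm_num, Real.sqrt_sq (by norm_num)]

/-- The half open book with page the punctured ball `S² × [0,1]` is
homeomorphic to `S² × D²`. -/
theorem half_open_book_of_punctured_ball :
    Nonempty (
      -- the half open book with page S² × [0,1], with boundary S² × {0,1}
      Quot (fun p q : (Metric.sphere (0 : EuclideanSpace ℝ (Fin 3)) 1 × Set.Icc (0:ℝ) 1) ×
          Set.Icc (0:ℝ) (1/2) =>
        (p.1.2.1 = 0 ∨ p.1.2.1 = 1) ∧ q.1 = p.1)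
      ≃ₜ
      -- S² × D²
      Metric.sphere (0 : EuclideanSpace ℝ (Fin 3)) 1 ×
        Metric.closedBall (0 : EuclideanSpace ℝ (Fin 2)) 1) := by
  set S := Metric.sphere (0 : EuclideanSpace ℝ (Fin 3)) 1 with hS
  set D := Metric.closedBall (0 : EuclideanSpace ℝ (Fin 2)) 1 with hD
  set X := (S × Set.Icc (0:ℝ) 1) × Set.Icc (0:ℝ) (1/2) with hX
  set r : X → X → Prop := fun p q => (p.1.2.1 = 0 ∨ p.1.2.1 = 1) ∧ q.1 = p.1 with hr
  set F : X → S × D := fun p => (p.1.1, ⟨gmap p.1.2.1 p.2.1, gmap_mem p.1.2.2 p.2.2⟩) with hF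
  have hFr : ∀ p q : X, r p q → F p = F q := by
    rintro p q ⟨he, hq⟩
    simp only [hF, hq]
    exact Prod.ext rfl (Subtype.ext (gmap_edge he _ _))
  have hFc : Continuous F := by
    refine continuous_prodMk.mpr ⟨continuous_fst.fst, ?_⟩
    apply Continuous.subtype_mk
    exact continuous_gmap.comp ((continuous_subtype_val.comp continuous_fst.snd).prodMk
      (continuous_subtype_val.comp continuous_snd))
  have hcont : Continuous (Quot.lift F hFr : Quot r → S × D) :=
    continuous_quot_lift hFr hFc
  -- injectivity
  have hinj : Function.Injective (Quot.lift F hFr) := by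
    intro a b
    refine Quot.induction_on₂ a b ?_
    intro p q hpq
    simp only [Quot.lift_mk] at hpq
    have h1 : p.1.1 = q.1.1 := (Prod.ext_iff.mp hpq).1
    have h2 : gmap p.1.2.1 p.2.1 = gmap q.1.2.1 q.2.1 :=
      congrArg Subtype.val (Prod.ext_iff.mp hpq).2
    have hcoord0 : (2:ℝ)*p.1.2.1-1 = 2*q.1.2.1-1 := by
      rw [← gmap_apply0 p.1.2.1 p.2.1, ← gmap_apply0 q.1.2.1 q.2.1, h2]
    have hee : p.1.2.1 = q.1.2.1 := by linarith
    have hcoord1 : (4*p.2.1-1)*(2*Real.sqrt (p.1.2.1*(1-p.1.2.1)))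
        = (4*q.2.1-1)*(2*Real.sqrt (p.1.2.1*(1-p.1.2.1))) := by
      rw [← gmap_apply1 p.1.2.1 p.2.1, h2, gmap_apply1, hee]
    by_cases hedge : p.1.2.1 = 0 ∨ p.1.2.1 = 1
    · exact Quot.sound ⟨hedge, Prod.ext h1.symm (Subtype.ext hee.symm)⟩
    · push_neg at hedge
      have hpos : 0 < Real.sqrt (p.1.2.1*(1-p.1.2.1)) := by
        apply Real.sqrt_pos.mpr
        have h01 := p.1.2.2
        rcases h01 with ⟨ha, hb⟩
        rcases lt_or_eq_of_le ha with ha' | ha'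
        · rcases lt_or_eq_of_le hb with hb' | hb'
          · nlinarith
          · exact absurd hb' hedge.2
        · exact absurd ha'.symm hedge.1
      have htt : p.2.1 = q.2.1 := by
        have := mul_right_cancel₀ (by positivity : (2*Real.sqrt (p.1.2.1*(1-p.1.2.1))) ≠ 0) hcoord1
        linarith
      congr 1
      exact Prod.ext (Prod.ext h1 (Subtype.ext hee)) (Subtype.ext htt)
  -- surjectivity
  have hsurj : Function.Surjective (Quot.lift F hFr) := by
    rintro ⟨xs, d, hd⟩
    set x := (d : EuclideanSpace ℝ (Fin 2)) 0 with hx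
    set y := (d : EuclideanSpace ℝ (Fin 2)) 1 with hy
    have hnorm : x^2 + y^2 ≤ 1 := by
      have h1 : ‖d‖ ≤ 1 := by
        rwa [Metric.mem_closedBall, dist_zero_right] at hd
      have h2 : ‖d‖^2 = x^2 + y^2 := by
        rw [EuclideanSpace.norm_eq, Real.sq_sqrt (by positivity)]
        simp [Fin.sum_univ_two, ← hx, ← hy, sq_abs]
      nlinarith [norm_nonneg d]
    have hx1 : x^2 ≤ 1 := by nlinarith [sq_nonneg y]
    rcases eq_or_lt_of_le hx1 with hxe | hxlt
    · -- x = ±1, y = 0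
      have hy0 : y = 0 := by nlinarith [sq_nonneg y]
      have hfac : (x-1)*(x+1) = 0 := by nlinarith
      rcases mul_eq_zero.mp hfac with h | h
      · -- x = 1 : take e = 1, t = 0
        refine ⟨Quot.mk _ ⟨⟨xs, ⟨1, by norm_num⟩⟩, ⟨0, by norm_num⟩⟩, ?_⟩
        simp only [Quot.lift_mk, hF]
        refine Prod.ext rfl (Subtype.ext ?_)
        refine PiLp.ext (fun i => ?_)
        fin_cases i
        · show (2:ℝ)*1-1 = x
          linarith
        · show (4*(0:ℝ)-1)*(2*Real.sqrt (1*(1-1))) = y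
          simp
          nlinarith
      · -- x = -1 : take e = 0, t = 0
        refine ⟨Quot.mk _ ⟨⟨xs, ⟨0, by norm_num⟩⟩, ⟨0, by norm_num⟩⟩, ?_⟩
        simp only [Quot.lift_mk, hF]
        refine Prod.ext rfl (Subtype.ext ?_)
        refine PiLp.ext (fun i => ?_)
        fin_cases i
        · show (2:ℝ)*0-1 = x
          linarith
        · show (4*(0:ℝ)-1)*(2*Real.sqrt (0*(1-0))) = y
          simp
          nlinarith
    · -- interior case: -1 < x < 1
      have hxlt' : -1 < x ∧ x < 1 := abs_lt.mp (by nlinarith [abs_nonneg x, sq_abs x] : |x| < 1)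
      set s := Real.sqrt (1 - x^2) with hs
      have hspos : 0 < s := Real.sqrt_pos.mpr (by nlinarith)
      have hssq : s^2 = 1 - x^2 := Real.sq_sqrt (by nlinarith)
      have hys : -s ≤ y ∧ y ≤ s := by
        constructor <;> nlinarith
      set e := (x+1)/2 with he
      set t := (y/s + 1)/4 with ht
      have hemem : e ∈ Set.Icc (0:ℝ) 1 := ⟨by linarith [hxlt'.1], by linarith [hxlt'.2]⟩
      have hds : y/s ∈ Set.Icc (-1:ℝ) 1 := by
        constructor
        · rw [le_div_iff₀ hspos]; linarith [hys.1]
        · rw [div_le_one hspos]; exact hys.2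
      have htmem : t ∈ Set.Icc (0:ℝ) (1/2) := ⟨by linarith [hds.1], by linarith [hds.2]⟩
      have hesq : Real.sqrt (e*(1-e)) = s/2 := by
        rw [show e*(1-e) = (1-x^2)/4 by rw [he]; ring,
          Real.sqrt_div (by nlinarith) 4, sqrt_four, hs]
      refine ⟨Quot.mk _ ⟨⟨xs, ⟨e, hemem⟩⟩, ⟨t, htmem⟩⟩, ?_⟩
      simp only [Quot.lift_mk, hF]
      refine Prod.ext rfl (Subtype.ext ?_)
      refine PiLp.ext (fun i => ?_)
      fin_cases i
      · show 2*e-1 = x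
        rw [he]; ring
      · show (4*t-1)*(2*Real.sqrt (e*(1-e))) = y
        rw [hesq, ht]
        field_simp
        ring
  exact ⟨Continuous.homeoOfEquivCompactToT2
    (f := Equiv.ofBijective _ ⟨hinj, hsurj⟩) hcont⟩
end

section
/- The open book with page the punctured ball and trivial monodromy is S² × S²: the quotient of (S² × [0,1]) × [0,1] by the equivalence relation generated by ((x,r),1) ∼ ((x,r),0) for all (x,r) ∈ S² × [0,1] and ((x,e),t) ∼ ((x,e),t′) for all x ∈ S², e ∈ {0,1}, t,t′ ∈ [0,1] is homeomorphic to S² × S², where S² is the unit sphere in ℝ³. -/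
open Real

noncomputable section OpenBookAux

def obSph (r t : ℝ) : EuclideanSpace ℝ (Fin 3) :=
  (WithLp.equiv 2 (Fin 3 → ℝ)).symm
    ![Real.sin (π*r) * Real.cos (2*π*t), Real.sin (π*r) * Real.sin (2*π*t), Real.cos (π*r)]

lemma obSph_apply0 (r t : ℝ) : obSph r t 0 = Real.sin (π*r) * Real.cos (2*π*t) := by simp [obSph]
lemma obSph_apply1 (r t : ℝ) : obSph r t 1 = Real.sin (π*r) * Real.sin (2*π*t) := by simp [obSph]
lemma obSph_apply2 (r t : ℝ) : obSph r t 2 = Real.cos (π*r) := by simp [obSph]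

lemma eucl3_ext {x y : EuclideanSpace ℝ (Fin 3)} (h0 : x 0 = y 0) (h1 : x 1 = y 1)
    (h2 : x 2 = y 2) : x = y := by
  ext i
  fin_cases i
  · exact h0
  · exact h1
  · exact h2

lemma obSph_mem (r t : ℝ) : obSph r t ∈ Metric.sphere (0 : EuclideanSpace ℝ (Fin 3)) 1 := by
  rw [mem_sphere_zero_iff_norm, EuclideanSpace.norm_eq]
  rw [Fin.sum_univ_three, obSph_apply0, obSph_apply1, obSph_apply2]
  simp only [Real.norm_eq_abs, sq_abs]
  have h1 := Real.sin_sq_add_cos_sq (2*π*t)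
  have h2 := Real.sin_sq_add_cos_sq (π*r)
  rw [show (sin (π * r) * cos (2 * π * t)) ^ 2 + (sin (π * r) * sin (2 * π * t)) ^ 2
      + cos (π * r) ^ 2 = 1 by nlinarith]
  exact Real.sqrt_one

@[fun_prop]
lemma obSph_cont : Continuous (fun p : ℝ × ℝ => obSph p.1 p.2) := by
  apply (PiLp.continuous_toLp 2 (fun _ : Fin 3 => ℝ)).comp
  apply continuous_pi
  intro i
  fin_cases i <;> simp <;> fun_prop

lemma obSph_boundary (r t t' : ℝ) (h : Real.sin (π*r) = 0) : obSph r t = obSph r t' := by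
  simp [obSph, h]

lemma obSph_one_eq_zero (r : ℝ) : obSph r 1 = obSph r 0 := by
  simp [obSph, mul_one, mul_zero, Real.cos_two_pi, Real.sin_two_pi]

lemma sin_pi_mul_eq_zero {r : ℝ} (hr : r ∈ Set.Icc (0:ℝ) 1) (h : Real.sin (π*r) = 0) :
    r = 0 ∨ r = 1 := by
  have hπ : (0:ℝ) < π := Real.pi_pos
  obtain ⟨n, hn⟩ := Real.sin_eq_zero_iff.mp h
  have hnr : (n : ℝ) = r :=
    mul_right_cancel₀ (ne_of_gt hπ) (by linarith [hn] : (n:ℝ) * π = r * π)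
  have h0 : (0:ℤ) ≤ n := by exact_mod_cast (hnr ▸ hr.1 : (0:ℝ) ≤ (n:ℝ))
  have h1 : n ≤ (1:ℤ) := by exact_mod_cast (hnr ▸ hr.2 : ((n:ℝ) ≤ 1))
  interval_cases n
  · left; exact_mod_cast hnr.symm
  · right; exact_mod_cast hnr.symm

lemma angle_inj {t t' : ℝ} (ht : t ∈ Set.Icc (0:ℝ) 1) (ht' : t' ∈ Set.Icc (0:ℝ) 1)
    (hc : cos (2*π*t) = cos (2*π*t')) (hs : sin (2*π*t) = sin (2*π*t')) :
    t = t' ∨ (t = 1 ∧ t' = 0) ∨ (t = 0 ∧ t' = 1) := by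
  have hexp : Complex.exp ((2*π*t : ℝ) * Complex.I) = Complex.exp ((2*π*t' : ℝ) * Complex.I) := by
    rw [Complex.exp_mul_I, Complex.exp_mul_I, ← Complex.ofReal_cos, ← Complex.ofReal_cos,
      ← Complex.ofReal_sin, ← Complex.ofReal_sin, hc, hs]
  obtain ⟨n, hn⟩ := Complex.exp_eq_exp_iff_exists_int.mp hexp
  have him : 2*π*t = 2*π*t' + n*(2*π) := by
    have := congrArg Complex.im hn
    simpa using this
  have hπ : (0:ℝ) < π := Real.pi_pos
  have hnt : t = t' + n := by
    have : 2*π*(t - t' - n) = 0 := by ring_nf; linarith [him]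
    have h2 : t - t' - n = 0 := by
      rcases mul_eq_zero.mp this with h | h
      · nlinarith
      · exact h
    linarith
  have hb1 : (-1 : ℝ) ≤ (n:ℝ) := by
    rw [show (n:ℝ) = t - t' by linarith]; linarith [ht.1, ht.2, ht'.1, ht'.2]
  have hb2 : (n:ℝ) ≤ 1 := by
    rw [show (n:ℝ) = t - t' by linarith]; linarith [ht.1, ht.2, ht'.1, ht'.2]
  have hn1 : (-1 : ℤ) ≤ n := by exact_mod_cast hb1
  have hn2 : n ≤ (1 : ℤ) := by exact_mod_cast hb2
  interval_cases n <;> push_cast at hnt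
  · exact Or.inr (Or.inr ⟨by linarith [ht.1, ht'.2], by linarith [ht.1, ht'.2]⟩)
  · exact Or.inl (by linarith)
  · exact Or.inr (Or.inl ⟨by linarith [ht.2, ht'.1], by linarith [ht.2, ht'.1]⟩)

lemma exists_angle {a b : ℝ} (h : a^2 + b^2 = 1) :
    ∃ t : ℝ, t ∈ Set.Icc (0:ℝ) 1 ∧ cos (2*π*t) = a ∧ sin (2*π*t) = b := by
  have hπ : (0:ℝ) < π := Real.pi_pos
  set z : ℂ := a + b * Complex.I with hz
  have habs : ‖z‖ = 1 := by
    have : Complex.normSq z = 1 := by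
      rw [hz, Complex.normSq_add_mul_I]; linarith [h]
    rw [Complex.norm_def, this, Real.sqrt_one]
  have hz0 : z ≠ 0 := by
    intro h0; rw [h0] at habs; simp at habs
  have hcos : cos z.arg = a := by
    rw [Complex.cos_arg hz0, habs]; simp [hz]
  have hsin : sin z.arg = b := by
    rw [Complex.sin_arg, habs]; simp [hz]
  have harg1 := Complex.neg_pi_lt_arg z
  have harg2 := Complex.arg_le_pi z
  by_cases hθ : 0 ≤ z.arg
  · refine ⟨z.arg / (2*π), ⟨by positivity, ?_⟩, ?_, ?_⟩
    · rw [div_le_one (by positivity)]; linarith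
    · rw [show 2*π*(z.arg/(2*π)) = z.arg by field_simp]; exact hcos
    · rw [show 2*π*(z.arg/(2*π)) = z.arg by field_simp]; exact hsin
  · push_neg at hθ
    have hd : -(1/2 : ℝ) ≤ z.arg / (2*π) := by
      have h1 : (-π)/(2*π) ≤ z.arg/(2*π) := by gcongr
      have h2 : (-π)/(2*π) = -(1/2 : ℝ) := by
        rw [div_eq_iff (by positivity : (2*π : ℝ) ≠ 0)]; ring
      linarith
    refine ⟨z.arg / (2*π) + 1, ⟨by linarith, ?_⟩, ?_, ?_⟩
    · have : z.arg / (2*π) < 0 := div_neg_of_neg_of_pos hθ (by positivity)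
      linarith
    · rw [show 2*π*(z.arg/(2*π)+1) = z.arg + 2*π by field_simp, Real.cos_add_two_pi]; exact hcos
    · rw [show 2*π*(z.arg/(2*π)+1) = z.arg + 2*π by field_simp, Real.sin_add_two_pi]; exact hsin

/-! The pieces of the main construction, as top-level definitions. -/

abbrev obS2 : Set (EuclideanSpace ℝ (Fin 3)) := Metric.sphere (0 : EuclideanSpace ℝ (Fin 3)) 1

abbrev obX := (obS2 × Set.Icc (0:ℝ) 1) × Set.Icc (0:ℝ) 1

def obR : obX → obX → Prop := fun p q =>
  (p.2.1 = 1 ∧ q.2.1 = 0 ∧ q.1 = p.1) ∨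
  ((p.1.2.1 = 0 ∨ p.1.2.1 = 1) ∧ q.1 = p.1)

def obF : obX → obS2 × obS2 :=
  fun p => (p.1.1, ⟨obSph p.1.2.1 p.2.1, obSph_mem _ _⟩)

lemma obF_resp : ∀ p q, obR p q → obF p = obF q := by
  rintro p q (⟨h1, h0, hq⟩ | ⟨hb, hq⟩)
  · simp only [obF, hq, h1, h0]
    exact Prod.ext rfl (Subtype.ext (obSph_one_eq_zero _))
  · simp only [obF, hq]
    refine Prod.ext rfl (Subtype.ext ?_)
    apply obSph_boundary
    rcases hb with hb | hb
    · rw [hb, mul_zero, Real.sin_zero]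
    · rw [hb, mul_one, Real.sin_pi]

lemma obF_cont : Continuous obF := by
  unfold obF
  apply Continuous.prodMk
  · exact continuous_fst.comp continuous_fst
  · apply Continuous.subtype_mk
    fun_prop

lemma obF_inj : ∀ p q : obX, obF p = obF q → Quot.mk obR p = Quot.mk obR q := by
  intro p q hFeq
  have hx : p.1.1 = q.1.1 := congrArg (fun y : obS2 × obS2 => y.1) hFeq
  have hv : obSph p.1.2.1 p.2.1 = obSph q.1.2.1 q.2.1 := congrArg (fun y => (y.2 : EuclideanSpace ℝ (Fin 3))) hFeq
  have hrmem := p.1.2.2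
  have hrmem' := q.1.2.2
  have htmem := p.2.2
  have htmem' := q.2.2
  have hπ : (0:ℝ) < π := Real.pi_pos
  have h2 : Real.cos (π*p.1.2.1) = Real.cos (π*q.1.2.1) := by
    have := congrArg (fun v : EuclideanSpace ℝ (Fin 3) => v 2) hv
    simpa only [obSph_apply2] using this
  have hrr : p.1.2.1 = q.1.2.1 := by
    have hmem1 : π*p.1.2.1 ∈ Set.Icc 0 π :=
      ⟨mul_nonneg hπ.le hrmem.1, by nlinarith [hrmem.2]⟩
    have hmem2 : π*q.1.2.1 ∈ Set.Icc 0 π :=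
      ⟨mul_nonneg hπ.le hrmem'.1, by nlinarith [hrmem'.2]⟩
    have := Real.injOn_cos hmem1 hmem2 h2
    exact mul_left_cancel₀ (ne_of_gt hπ) this
  have hq1p1 : q.1 = p.1 := Prod.ext hx.symm (Subtype.ext hrr.symm)
  by_cases hs0 : Real.sin (π*p.1.2.1) = 0
  · exact Quot.sound (Or.inr ⟨sin_pi_mul_eq_zero hrmem hs0, hq1p1⟩)
  · have h0 : Real.sin (π*p.1.2.1) * Real.cos (2*π*p.2.1)
        = Real.sin (π*p.1.2.1) * Real.cos (2*π*q.2.1) := by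
      have := congrArg (fun v : EuclideanSpace ℝ (Fin 3) => v 0) hv
      simpa only [obSph_apply0, ← hrr] using this
    have h1 : Real.sin (π*p.1.2.1) * Real.sin (2*π*p.2.1)
        = Real.sin (π*p.1.2.1) * Real.sin (2*π*q.2.1) := by
      have := congrArg (fun v : EuclideanSpace ℝ (Fin 3) => v 1) hv
      simpa only [obSph_apply1, ← hrr] using this
    have hc := mul_left_cancel₀ hs0 h0
    have hsn := mul_left_cancel₀ hs0 h1
    rcases angle_inj htmem htmem' hc hsn with htt | ⟨ht1, ht0⟩ | ⟨ht1, ht0⟩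
    · have : p = q := Prod.ext hq1p1.symm (Subtype.ext htt)
      rw [this]
    · exact Quot.sound (Or.inl ⟨ht1, ht0, hq1p1⟩)
    · exact (Quot.sound (show obR q p from Or.inl ⟨ht0, ht1, hq1p1.symm⟩)).symm

lemma obF_surj : Function.Surjective obF := by
  rintro ⟨y₁, y₂⟩
  have hy2 : (y₂ : EuclideanSpace ℝ (Fin 3)) ∈ obS2 := y₂.2
  rw [mem_sphere_zero_iff_norm, EuclideanSpace.norm_eq, Fin.sum_univ_three] at hy2
  set a := (y₂ : EuclideanSpace ℝ (Fin 3)) 0 with ha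
  set b := (y₂ : EuclideanSpace ℝ (Fin 3)) 1 with hb
  set c := (y₂ : EuclideanSpace ℝ (Fin 3)) 2 with hc
  have hsum : a^2 + b^2 + c^2 = 1 := by
    have := Real.sqrt_eq_one.mp hy2
    simpa [Real.norm_eq_abs, sq_abs] using this
  have hπ : (0:ℝ) < π := Real.pi_pos
  have hc1 : -1 ≤ c := by nlinarith
  have hc2 : c ≤ 1 := by nlinarith
  set r := Real.arccos c / π with hrdef
  have hrmem : r ∈ Set.Icc (0:ℝ) 1 := by
    constructor
    · exact div_nonneg (Real.arccos_nonneg c) hπ.le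
    · rw [div_le_one hπ]; exact Real.arccos_le_pi c
  have hπr : π * r = Real.arccos c := by rw [hrdef]; field_simp
  have hcosr : Real.cos (π*r) = c := by rw [hπr]; exact Real.cos_arccos hc1 hc2
  have hsinr : Real.sin (π*r) = Real.sqrt (a^2 + b^2) := by
    rw [hπr, Real.sin_arccos]
    congr 1
    nlinarith
  by_cases hρ : Real.sqrt (a^2+b^2) = 0
  · have hab0 : a^2 + b^2 = 0 := by
      have := Real.sqrt_eq_zero'.mp hρ
      nlinarith
    have ha0 : a = 0 := by nlinarith
    have hb0 : b = 0 := by nlinarith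
    refine ⟨((y₁, ⟨r, hrmem⟩), ⟨0, by norm_num⟩), ?_⟩
    refine Prod.ext rfl (Subtype.ext ?_)
    show obSph r 0 = (y₂ : EuclideanSpace ℝ (Fin 3))
    refine eucl3_ext ?_ ?_ ?_
    · rw [obSph_apply0, hsinr, hρ, zero_mul, ← ha]; exact ha0.symm
    · rw [obSph_apply1, hsinr, hρ, zero_mul, ← hb]; exact hb0.symm
    · rw [obSph_apply2, hcosr, hc]
  · have hρpos : 0 < Real.sqrt (a^2+b^2) := lt_of_le_of_ne (Real.sqrt_nonneg _) (Ne.symm hρ)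
    have hρsq : (Real.sqrt (a^2+b^2))^2 = a^2+b^2 := Real.sq_sqrt (by positivity)
    have hdiv : (a / Real.sqrt (a^2+b^2))^2 + (b / Real.sqrt (a^2+b^2))^2 = 1 := by
      rw [div_pow, div_pow, ← add_div, hρsq, div_self]
      intro h0
      rw [← hρsq, h0] at hρpos
      simp at hρpos
    obtain ⟨t, htmem, hct, hst⟩ := exists_angle hdiv
    refine ⟨((y₁, ⟨r, hrmem⟩), ⟨t, htmem⟩), ?_⟩
    refine Prod.ext rfl (Subtype.ext ?_)
    show obSph r t = (y₂ : EuclideanSpace ℝ (Fin 3))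
    refine eucl3_ext ?_ ?_ ?_
    · rw [obSph_apply0, hsinr, hct, mul_comm, div_mul_cancel₀ _ hρ, ha]
    · rw [obSph_apply1, hsinr, hst, mul_comm, div_mul_cancel₀ _ hρ, hb]
    · rw [obSph_apply2, hcosr, hc]

end OpenBookAux

lemma obQuot_compact : CompactSpace (Quot obR) := by
  constructor
  rw [show (Set.univ : Set (Quot obR)) = Set.range (Quot.mk obR) from
    (Set.range_eq_univ.mpr Quot.mk_surjective).symm, ← Set.image_univ]
  exact isCompact_univ.image continuous_quot_mk

lemma obHomeo : Nonempty (Quot obR ≃ₜ obS2 × obS2) := by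
  haveI : CompactSpace (Quot obR) := obQuot_compact
  have hinj : Function.Injective (Quot.lift obF obF_resp) := by
    intro a b h
    obtain ⟨p, rfl⟩ := Quot.exists_rep a
    obtain ⟨q, rfl⟩ := Quot.exists_rep b
    exact obF_inj p q h
  have hsurj : Function.Surjective (Quot.lift obF obF_resp) := by
    intro y
    obtain ⟨p, hp⟩ := obF_surj y
    exact ⟨Quot.mk _ p, hp⟩
  have hcont : Continuous (Quot.lift obF obF_resp) := continuous_quot_lift _ obF_cont
  exact ⟨Continuous.homeoOfEquivCompactToT2
    (f := Equiv.ofBijective (Quot.lift obF obF_resp) ⟨hinj, hsurj⟩) hcont⟩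

/-- The open book with page the punctured ball `S² × [0,1]` and trivial
monodromy is `S² × S²`. -/
theorem open_book_of_punctured_ball_id :
    Nonempty (
      -- the open book Ob(S² × [0,1], S² × {0,1}, id)
      Quot (fun p q : (Metric.sphere (0 : EuclideanSpace ℝ (Fin 3)) 1 × Set.Icc (0:ℝ) 1) ×
          Set.Icc (0:ℝ) 1 =>
        (p.2.1 = 1 ∧ q.2.1 = 0 ∧ q.1 = p.1) ∨
        ((p.1.2.1 = 0 ∨ p.1.2.1 = 1) ∧ q.1 = p.1))
      ≃ₜ
      -- S² × S²
      Metric.sphere (0 : EuclideanSpace ℝ (Fin 3)) 1 ×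
        Metric.sphere (0 : EuclideanSpace ℝ (Fin 3)) 1) := by
  exact obHomeo
end

section
/- The half open book with page the solid torus S¹ × D² is homeomorphic to S¹ × D³: the quotient of (S¹ × D²) × [0,1/2] by the equivalence relation generated by ((z,y),t) ∼ ((z,y),t′) for all z ∈ S¹, y ∈ D² with ‖y‖ = 1, and all t,t′ ∈ [0,1/2] is homeomorphic to S¹ × D³, where S¹ is the unit circle in ℂ, D² is the closed unit disk in ℝ², and D³ is the closed unit ball in ℝ³. -/
open Metric Set

/-- Projection to the first two coordinates. -/
noncomputable def hobL : EuclideanSpace ℝ (Fin 3) →ₗ[ℝ] EuclideanSpace ℝ (Fin 2) where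
  toFun v := (WithLp.toLp 2 (fun i : Fin 2 => v (Fin.castSucc i)) : EuclideanSpace ℝ (Fin 2))
  map_add' _ _ := rfl
  map_smul' _ _ := rfl

lemma hobL_apply (v : EuclideanSpace ℝ (Fin 3)) (i : Fin 2) : hobL v i = v (Fin.castSucc i) := rfl

lemma hobL_cont : Continuous hobL := hobL.continuous_of_finiteDimensional

/-- The cone over the unit disk. -/
def hobC : Set (EuclideanSpace ℝ (Fin 3)) := {v | ‖hobL v‖ + 2 * v 2 ≤ 1 ∧ 0 ≤ v 2}

lemma hob_add2 (v w : EuclideanSpace ℝ (Fin 3)) : (v + w) 2 = v 2 + w 2 := rfl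
lemma hob_smul2 (a : ℝ) (v : EuclideanSpace ℝ (Fin 3)) : (a • v) 2 = a * v 2 := rfl

lemma hob_convex : Convex ℝ hobC := by
  intro v hv w hw a b ha hb hab
  obtain ⟨hv1, hv2⟩ := hv; obtain ⟨hw1, hw2⟩ := hw
  constructor
  · have : ‖hobL (a • v + b • w)‖ ≤ a * ‖hobL v‖ + b * ‖hobL w‖ := by
      rw [map_add, map_smul, map_smul]
      refine (norm_add_le _ _).trans ?_
      rw [norm_smul, norm_smul]
      simp [abs_of_nonneg ha, abs_of_nonneg hb]
    rw [hob_add2, hob_smul2, hob_smul2]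
    nlinarith
  · rw [hob_add2, hob_smul2, hob_smul2]; positivity

lemma hob_closed : IsClosed hobC := by
  have h1 : IsClosed {v : EuclideanSpace ℝ (Fin 3) | ‖hobL v‖ + 2 * v 2 ≤ 1} :=
    isClosed_le ((hobL_cont.norm).add (continuous_const.mul ((continuous_apply 2).comp (PiLp.continuous_ofLp 2 _))))
      continuous_const
  have h2 : IsClosed {v : EuclideanSpace ℝ (Fin 3) | 0 ≤ v 2} :=
    isClosed_le continuous_const ((continuous_apply 2).comp (PiLp.continuous_ofLp 2 _))
  exact h1.inter h2

lemma hob_interior_ne : (interior hobC).Nonempty := by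
  have hUopen : IsOpen {v : EuclideanSpace ℝ (Fin 3) | ‖hobL v‖ + 2 * v 2 < 1 ∧ 0 < v 2} :=
    (isOpen_lt ((hobL_cont.norm).add (continuous_const.mul ((continuous_apply 2).comp (PiLp.continuous_ofLp 2 _))))
      continuous_const).inter (isOpen_lt continuous_const ((continuous_apply 2).comp (PiLp.continuous_ofLp 2 _)))
  have hsub : {v : EuclideanSpace ℝ (Fin 3) | ‖hobL v‖ + 2 * v 2 < 1 ∧ 0 < v 2} ⊆ hobC :=
    fun v hv => ⟨hv.1.le, hv.2.le⟩
  refine ⟨WithLp.toLp 2 (fun i => if i = 2 then 1/4 else 0 : Fin 3 → ℝ), interior_maximal hsub hUopen ?_⟩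
  constructor
  · have : hobL (WithLp.toLp 2 (fun i => if i = 2 then 1/4 else 0 : Fin 3 → ℝ)) = 0 := by
      ext i; fin_cases i <;> simp [hobL_apply]
    rw [this]; norm_num
  · norm_num

lemma hob_norm_sq_split (v : EuclideanSpace ℝ (Fin 3)) : ‖v‖^2 = ‖hobL v‖^2 + (v 2)^2 := by
  rw [EuclideanSpace.norm_eq, EuclideanSpace.norm_eq, Real.sq_sqrt (by positivity),
    Real.sq_sqrt (by positivity)]
  simp [Fin.sum_univ_three, Fin.sum_univ_two, hobL_apply]

lemma hob_bounded : Bornology.IsBounded hobC := by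
  rw [Metric.isBounded_iff_subset_closedBall (0 : EuclideanSpace ℝ (Fin 3))]
  refine ⟨2, fun v hv => ?_⟩
  obtain ⟨h1, h2⟩ := hv
  have hL : ‖hobL v‖ ≤ 1 := by nlinarith
  have hv2 : v 2 ≤ 1 := by nlinarith [norm_nonneg (hobL v)]
  have hsq := hob_norm_sq_split v
  have : ‖v‖ ≤ 2 := by nlinarith [norm_nonneg v, norm_nonneg (hobL v)]
  simpa [mem_closedBall, dist_zero_right] using this

/-- The collapsing map `D² × ℝ → ℝ³`. -/
noncomputable def hobG (y : EuclideanSpace ℝ (Fin 2)) (t : ℝ) : EuclideanSpace ℝ (Fin 3) :=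
  WithLp.toLp 2 (Fin.snoc y ((1 - ‖y‖) * t) : Fin 3 → ℝ)

lemma hobL_G (y : EuclideanSpace ℝ (Fin 2)) (t : ℝ) : hobL (hobG y t) = y := by
  ext i; simp [hobL_apply, hobG, Fin.snoc_castSucc]

lemma hobG_last (y : EuclideanSpace ℝ (Fin 2)) (t : ℝ) : hobG y t 2 = (1 - ‖y‖) * t := by
  show (Fin.snoc y ((1 - ‖y‖) * t) : Fin 3 → ℝ) (Fin.last 2) = _
  exact Fin.snoc_last _ _

lemma hobG_cont : Continuous fun p : EuclideanSpace ℝ (Fin 2) × ℝ => hobG p.1 p.2 := by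
  apply (PiLp.continuous_toLp 2 _).comp
  apply continuous_pi
  intro i
  refine Fin.lastCases ?_ ?_ i
  · exact
      ((continuous_const.sub (continuous_norm.comp continuous_fst)).mul continuous_snd)
  · intro j
    simp only [hobG, Fin.snoc_castSucc]
    exact (PiLp.continuous_apply 2 (fun _ : Fin 2 => ℝ) j).comp
      (continuous_fst (X := EuclideanSpace ℝ (Fin 2)) (Y := ℝ))

lemma hobG_mem {y : EuclideanSpace ℝ (Fin 2)} {t : ℝ} (hy : ‖y‖ ≤ 1)
    (ht : t ∈ Icc (0:ℝ) (1/2)) : hobG y t ∈ hobC := by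
  constructor
  · rw [hobL_G, hobG_last]
    nlinarith [ht.1, ht.2, norm_nonneg y]
  · rw [hobG_last]
    nlinarith [ht.1, norm_nonneg y]

lemma hobG_surj {v : EuclideanSpace ℝ (Fin 3)} (hv : v ∈ hobC) :
    ∃ y t, ‖y‖ ≤ 1 ∧ t ∈ Icc (0:ℝ) (1/2) ∧ hobG y t = v := by
  obtain ⟨h1, h2⟩ := hv
  set y := hobL v with hy
  have hyn : ‖y‖ ≤ 1 := by nlinarith
  by_cases hone : ‖y‖ = 1
  · have hv2 : v 2 = 0 := by nlinarith
    refine ⟨y, 0, hyn, ⟨le_refl _, by norm_num⟩, ?_⟩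
    ext i
    refine Fin.lastCases ?_ ?_ i
    · rw [show (hobG y 0) (Fin.last 2) = (1 - ‖y‖) * 0 from by
        simpa using hobG_last y 0]
      rw [show (Fin.last 2 : Fin 3) = 2 from rfl, hv2]; ring
    · intro j
      show (Fin.snoc y ((1 - ‖y‖) * 0) : Fin 3 → ℝ) j.castSucc = v j.castSucc
      simp [hy, hobL_apply]
  · have hpos : 0 < 1 - ‖y‖ := lt_of_le_of_ne (by linarith) fun hc => hone (by linarith)
    refine ⟨y, v 2 / (1 - ‖y‖), hyn, ⟨by positivity, ?_⟩, ?_⟩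
    · rw [div_le_iff₀ hpos]; nlinarith
    · ext i
      refine Fin.lastCases ?_ ?_ i
      · rw [show (hobG y (v 2 / (1 - ‖y‖))) (Fin.last 2) = (1 - ‖y‖) * (v 2 / (1 - ‖y‖)) from by
          simpa using hobG_last y _]
        rw [show (Fin.last 2 : Fin 3) = 2 from rfl]
        field_simp
      · intro j
        show (Fin.snoc y _ : Fin 3 → ℝ) j.castSucc = v j.castSucc
        simp [hy, hobL_apply]

lemma hobG_inj {y y' : EuclideanSpace ℝ (Fin 2)} {t t' : ℝ}
    (h : hobG y t = hobG y' t') : y = y' ∧ (t = t' ∨ ‖y‖ = 1) := by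
  have hyy : y = y' := by rw [← hobL_G y t, ← hobL_G y' t', h]
  refine ⟨hyy, ?_⟩
  have h2 : (1 - ‖y‖) * t = (1 - ‖y'‖) * t' := by rw [← hobG_last, ← hobG_last, h]
  rw [← hyy] at h2
  by_cases hone : ‖y‖ = 1
  · exact Or.inr hone
  · left
    have : (1 - ‖y‖) ≠ 0 := fun hc => hone (by linarith [hc])
    exact mul_left_cancel₀ this h2

lemma hobG_collapse {y : EuclideanSpace ℝ (Fin 2)} (hy : ‖y‖ = 1) (t t' : ℝ) :
    hobG y t = hobG y t' := by
  unfold hobG; rw [hy]; ring_nf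


section Assemble

variable (h : EuclideanSpace ℝ (Fin 3) ≃ₜ EuclideanSpace ℝ (Fin 3))
  (hC : h '' hobC = closedBall 0 1)

/-- The base relation of the half open book. -/
def hobR : ((Metric.sphere (0:ℂ) 1 × Metric.closedBall (0 : EuclideanSpace ℝ (Fin 2)) 1) ×
    Set.Icc (0:ℝ) (1/2)) →
    ((Metric.sphere (0:ℂ) 1 × Metric.closedBall (0 : EuclideanSpace ℝ (Fin 2)) 1) ×
    Set.Icc (0:ℝ) (1/2)) → Prop :=
  fun p q => ‖(p.1.2 : EuclideanSpace ℝ (Fin 2))‖ = 1 ∧ q.1 = p.1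

/-- The map inducing the homeomorphism. -/
noncomputable def hobF :
    (Metric.sphere (0:ℂ) 1 × Metric.closedBall (0 : EuclideanSpace ℝ (Fin 2)) 1) ×
      Set.Icc (0:ℝ) (1/2) →
    Metric.sphere (0:ℂ) 1 × Metric.closedBall (0 : EuclideanSpace ℝ (Fin 3)) 1 :=
  fun p => (p.1.1, ⟨h (hobG (p.1.2 : EuclideanSpace ℝ (Fin 2)) (p.2 : ℝ)), by
    rw [← hC]
    exact mem_image_of_mem _ (hobG_mem (mem_closedBall_zero_iff.mp p.1.2.2) p.2.2)⟩)

lemma hobF_resp : ∀ p q, hobR p q → hobF h hC p = hobF h hC q := by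
  rintro ⟨⟨z, y⟩, t⟩ ⟨⟨z', y'⟩, t'⟩ ⟨h1, h2⟩
  injection h2 with e1 e2
  subst e1; subst e2
  exact Prod.ext rfl (Subtype.ext (congrArg h (hobG_collapse h1 (t : ℝ) (t' : ℝ))))

set_option maxHeartbeats 1000000 in
lemma hobF_cont : Continuous (hobF h hC) := by
  refine continuous_prodMk.mpr ⟨(continuous_fst.comp continuous_fst), ?_⟩
  refine Continuous.subtype_mk ?_ _
  have h1 : Continuous (fun p : (Metric.sphere (0:ℂ) 1 ×
      Metric.closedBall (0 : EuclideanSpace ℝ (Fin 2)) 1) × Set.Icc (0:ℝ) (1/2) =>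
      ((p.1.2 : EuclideanSpace ℝ (Fin 2)), (p.2 : ℝ))) :=
    (continuous_subtype_val.comp (continuous_snd.comp continuous_fst)).prodMk
      (continuous_subtype_val.comp continuous_snd)
  have h2 := hobG_cont.comp h1
  exact h.continuous.comp h2

lemma hobF_eq_imp (p q : (Metric.sphere (0:ℂ) 1 ×
      Metric.closedBall (0 : EuclideanSpace ℝ (Fin 2)) 1) × Set.Icc (0:ℝ) (1/2))
    (hpq : hobF h hC p = hobF h hC q) : Quot.mk hobR p = Quot.mk hobR q := by
  have hz : p.1.1 = q.1.1 := congrArg (fun w : Metric.sphere (0:ℂ) 1 ×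
      Metric.closedBall (0 : EuclideanSpace ℝ (Fin 3)) 1 => w.1) hpq
  have hg : hobG (p.1.2 : EuclideanSpace ℝ (Fin 2)) (p.2 : ℝ)
      = hobG (q.1.2 : EuclideanSpace ℝ (Fin 2)) (q.2 : ℝ) :=
    h.injective (congrArg (fun w : Metric.sphere (0:ℂ) 1 ×
      Metric.closedBall (0 : EuclideanSpace ℝ (Fin 3)) 1 =>
        (w.2 : EuclideanSpace ℝ (Fin 3))) hpq)
  obtain ⟨hy, hto⟩ := hobG_inj hg
  have hy' : p.1.2 = q.1.2 := Subtype.ext hy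
  rcases hto with ht | hone
  · have : p = q := Prod.ext (Prod.ext hz hy') (Subtype.ext ht)
    rw [this]
  · exact Quot.sound ⟨hone, (Prod.ext hz hy').symm⟩

lemma hobF_inj : Function.Injective (Quot.lift (hobF h hC) (hobF_resp h hC)) := by
  intro a b hab
  induction a using Quot.ind with | _ p => ?_
  induction b using Quot.ind with | _ q => ?_
  exact hobF_eq_imp h hC p q hab

lemma hobF_surj : Function.Surjective (Quot.lift (hobF h hC) (hobF_resp h hC)) := by
  rintro ⟨z, w⟩
  have hw : (w : EuclideanSpace ℝ (Fin 3)) ∈ h '' hobC := by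
    rw [hC]; exact w.2
  obtain ⟨v, hvC, hv⟩ := hw
  obtain ⟨y, t, hy, ht, hg⟩ := hobG_surj hvC
  refine ⟨Quot.mk hobR ((z, ⟨y, mem_closedBall_zero_iff.mpr hy⟩), ⟨t, ht⟩), ?_⟩
  show hobF h hC _ = (z, w)
  refine Prod.ext rfl (Subtype.ext ?_)
  show h (hobG y t) = (w : EuclideanSpace ℝ (Fin 3))
  rw [hg, hv]

end Assemble

/-- The half open book with page the solid torus `S¹ × D²` is homeomorphic
to `S¹ × D³`. -/
theorem half_open_book_of_solid_torus :
    Nonempty (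
      -- the half open book with page S¹ × D², with boundary S¹ × ∂D²
      Quot (fun p q : (Metric.sphere (0:ℂ) 1 ×
          Metric.closedBall (0 : EuclideanSpace ℝ (Fin 2)) 1) × Set.Icc (0:ℝ) (1/2) =>
        ‖(p.1.2 : EuclideanSpace ℝ (Fin 2))‖ = 1 ∧ q.1 = p.1)
      ≃ₜ
      -- S¹ × D³
      Metric.sphere (0:ℂ) 1 × Metric.closedBall (0 : EuclideanSpace ℝ (Fin 3)) 1) := by
  obtain ⟨h, -, hC, -⟩ :=
    exists_homeomorph_image_interior_closure_frontier_eq_unitBall hob_convex hob_interior_ne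
      hob_bounded
  rw [hob_closed.closure_eq] at hC
  haveI : CompactSpace (Metric.closedBall (0 : EuclideanSpace ℝ (Fin 2)) 1) :=
    isCompact_iff_compactSpace.mp (isCompact_closedBall _ _)
  haveI : CompactSpace (Metric.closedBall (0 : EuclideanSpace ℝ (Fin 3)) 1) :=
    isCompact_iff_compactSpace.mp (isCompact_closedBall _ _)
  exact ⟨Continuous.homeoOfEquivCompactToT2
    (f := Equiv.ofBijective _ ⟨hobF_inj h hC, hobF_surj h hC⟩)
    (continuous_quot_lift _ (hobF_cont h hC))⟩
end
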